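/- arXiv:2601.08453 — 8 statements merged into one kernel-verified Lean document; each statement's English description precedes it below -/
import Mathlib

section
/- Let m, r be positive integers and p a natural number with p ≥ r·m. Then the r-associated Stirling number of the second kind satisfies S_r(p,m) = (p!/m!) · Σ_{i₁+⋯+i_m = p−rm} 1/((r+i₁)! ⋯ (r+i_m)!), where the sum ranges over all tuples (i₁,…,i_m) of natural numbers with i₁+⋯+i_m = p−rm. -/
/-!
A function `f : Fin p → Fin m` all of whose fibres have at least `r` elements is the same thing as
a partition of `Fin p` into `m` parts of size at least `r` together with a labelling of its parts
by `Fin m`, so there are `m! · S_r(p, m)` such functions. Sorting them instead by their fibre sizes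
`r + i₁, …, r + i_m` counts them as `∑ p! / ∏ (r + i_j)!`: the permutations of `Fin p` act by
precomposition transitively on the functions with prescribed fibre sizes, and those carrying one
such function to another are the families of bijections between corresponding fibres.
-/

/-- `stirlingAssoc r p m` is the `r`-associated Stirling number of the second kind:
the number of partitions of `{1,…,p}` into exactly `m` parts, each of size at least `r`. -/
noncomputable def stirlingAssoc (r p m : ℕ) : ℕ :=
  Nat.card {P : Finpartition (Finset.univ : Finset (Fin p)) //
    P.parts.card = m ∧ ∀ s ∈ P.parts, r ≤ s.card}

open Finset Equiv Nat

variable {α ι : Type*} [Fintype α] [DecidableEq ι]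

def fiber (f : α → ι) (j : ι) : Finset α := {x | f x = j}

lemma mem_fiber {f : α → ι} {j : ι} {x : α} : x ∈ fiber f j ↔ f x = j := by
  simp [fiber]

lemma card_subtype_eq_card_fiber (f : α → ι) (j : ι) :
    Fintype.card {x // f x = j} = #(fiber f j) :=
  Fintype.card_subtype _

lemma card_fiber_comp_perm (f : α → ι) (σ : Perm α) (j : ι) :
    #(fiber (f ∘ σ) j) = #(fiber f j) := by
  rw [← card_subtype_eq_card_fiber, ← card_subtype_eq_card_fiber]
  exact Fintype.card_congr (σ.subtypeEquiv fun _ => Iff.rfl)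

lemma fiber_nonempty_of_le {r : ℕ} (hr : 0 < r) {f : α → ι} (hf : ∀ j, r ≤ #(fiber f j))
    (j : ι) : (fiber f j).Nonempty :=
  card_pos.1 (hr.trans_le (hf j))

lemma fiber_injective {f : α → ι} (hf : ∀ j, (fiber f j).Nonempty) :
    Function.Injective (fiber f) := fun j j' h => by
  obtain ⟨x, hx⟩ := hf j
  rw [← mem_fiber.1 hx, ← mem_fiber.1 (h ▸ hx : x ∈ fiber f j')]

def permCompEqEquiv (f g : α → ι) :
    {σ : Perm α // g ∘ σ = f} ≃ ∀ j, {x // f x = j} ≃ {x // g x = j} where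
  toFun σ j := σ.1.subtypeEquiv fun x => by rw [← congrFun σ.2 x]; rfl
  invFun τ := ⟨ofFiberEquiv τ, funext (ofFiberEquiv_map τ)⟩
  left_inv _ := rfl
  right_inv τ := by
    funext j; ext ⟨x, rfl⟩; rfl

section FiberCard

variable [Fintype ι]

lemma sum_card_fiber (f : α → ι) : ∑ j, #(fiber f j) = Fintype.card α :=
  (card_eq_sum_card_fiberwise fun x _ => mem_coe.2 (mem_univ (f x))).symm

lemma card_perm_comp_eq [DecidableEq α] (f g : α → ι) (h : ∀ j, #(fiber f j) = #(fiber g j)) :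
    Fintype.card {σ : Perm α // g ∘ σ = f} = ∏ j, (#(fiber f j))! := by
  rw [Fintype.card_congr (permCompEqEquiv f g), Fintype.card_pi]
  refine prod_congr rfl fun j _ => ?_
  have hcard : Fintype.card {x // f x = j} = Fintype.card {x // g x = j} := by
    rw [card_subtype_eq_card_fiber, card_subtype_eq_card_fiber, h]
  rw [Fintype.card_equiv (Fintype.equivOfCardEq hcard), card_subtype_eq_card_fiber]

lemma exists_card_fiber_eq (c : ι → ℕ) (hc : ∑ j, c j = Fintype.card α) :
    ∃ g : α → ι, ∀ j, #(fiber g j) = c j := by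
  obtain ⟨e⟩ : Nonempty (α ≃ Σ j, Fin (c j)) := ⟨Fintype.equivOfCardEq (by simp [hc])⟩
  refine ⟨fun x => (e x).1, fun j => ?_⟩
  rw [← card_subtype_eq_card_fiber, Fintype.card_congr
    ((e.subtypeEquiv (q := fun y => y.1 = j) fun _ => Iff.rfl).trans (sigmaSubtype j)),
    Fintype.card_fin]

theorem card_fiber_eq_mul_prod_factorial [DecidableEq α] (c : ι → ℕ)
    (hc : ∑ j, c j = Fintype.card α) :
    #{f : α → ι | ∀ j, #(fiber f j) = c j} * ∏ j, (c j)! = (Fintype.card α)! := by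
  obtain ⟨g, hg⟩ := exists_card_fiber_eq c hc
  have hmaps : ((univ : Finset (Perm α)) : Set (Perm α)).MapsTo (fun σ : Perm α => g ∘ σ)
      ({f : α → ι | ∀ j, #(fiber f j) = c j} : Finset _) := fun σ _ => by
    simp [card_fiber_comp_perm, hg]
  rw [← Fintype.card_perm, ← Finset.card_univ (α := Perm α), card_eq_sum_card_fiberwise hmaps,
    ← smul_eq_mul, ← sum_const]
  refine sum_congr rfl fun f hf => ?_
  rw [mem_filter] at hf
  rw [← Fintype.card_subtype, card_perm_comp_eq f g (by simp [hf.2, hg])]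
  simp [hf.2]

theorem card_fiber_ge_eq_sum [DecidableEq α] (r : ℕ) :
    #{f : α → ι | ∀ j, r ≤ #(fiber f j)} =
      ∑ c ∈ piAntidiag (univ : Finset ι) (Fintype.card α - r * Fintype.card ι),
        #{f : α → ι | ∀ j, #(fiber f j) = r + c j} := by
  have hmaps : Set.MapsTo (fun (f : α → ι) j => #(fiber f j) - r)
      ({f : α → ι | ∀ j, r ≤ #(fiber f j)} : Finset _)
      (piAntidiag univ (Fintype.card α - r * Fintype.card ι) : Finset (ι → ℕ)) := fun f hf => by
    rw [mem_coe, mem_filter] at hf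
    rw [mem_coe, mem_piAntidiag, sum_tsub_distrib _ fun j _ => hf.2 j, sum_card_fiber]
    simp [mul_comm]
  rw [card_eq_sum_card_fiberwise hmaps]
  refine sum_congr rfl fun c _ => ?_
  rw [filter_filter]
  congr 1
  ext f
  simp only [mem_filter, mem_univ, true_and, funext_iff, ← forall_and]
  exact forall_congr' fun j => by omega

theorem card_fiber_ge_eq_factorial_mul_sum [DecidableEq α] (r : ℕ)
    (h : r * Fintype.card ι ≤ Fintype.card α) :
    (#{f : α → ι | ∀ j, r ≤ #(fiber f j)} : ℝ) =
      (Fintype.card α)! *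
        ∑ c ∈ piAntidiag (univ : Finset ι) (Fintype.card α - r * Fintype.card ι),
          1 / ∏ j, ((r + c j)! : ℝ) := by
  rw [card_fiber_ge_eq_sum, Nat.cast_sum, mul_sum]
  refine sum_congr rfl fun c hc => ?_
  have hsum : ∑ j, (r + c j) = Fintype.card α := by
    rw [sum_add_distrib, (mem_piAntidiag.1 hc).1, sum_const, Finset.card_univ, smul_eq_mul,
      mul_comm]
    omega
  rw [mul_one_div, eq_div_iff (by positivity)]
  exact_mod_cast card_fiber_eq_mul_prod_factorial _ hsum

end FiberCard

section Partition

variable [DecidableEq α]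

def partLabel (P : Finpartition (univ : Finset α)) (e : ι ≃ P.parts) : α → ι :=
  fun x => e.symm ⟨P.part x, P.part_mem.2 (mem_univ x)⟩

lemma fiber_partLabel (P : Finpartition (univ : Finset α)) (e : ι ≃ P.parts) (j : ι) :
    fiber (partLabel P e) j = e j := by
  ext x
  rw [mem_fiber, partLabel, symm_apply_eq, ← Subtype.coe_inj, P.part_eq_iff_mem (e j).2]

variable [Fintype ι]

def fiberPartition (f : α → ι) (hf : ∀ j, (fiber f j).Nonempty) :
    Finpartition (univ : Finset α) :=
  .ofExistsUnique (univ.image (fiber f)) (fun _ _ => subset_univ _)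
    (fun x _ => ⟨fiber f (f x), ⟨mem_image_of_mem _ (mem_univ _), mem_fiber.2 rfl⟩, by
      rintro _ ⟨hs, hx⟩
      obtain ⟨j, -, rfl⟩ := mem_image.1 hs
      rw [mem_fiber.1 hx]⟩)
    (by simp [nonempty_iff_ne_empty.1 (hf _)])

lemma fiberPartition_parts {f : α → ι} (hf : ∀ j, (fiber f j).Nonempty) :
    (fiberPartition f hf).parts = univ.image (fiber f) := rfl

lemma fiberPartition_part {f : α → ι} (hf : ∀ j, (fiber f j).Nonempty) (x : α) :
    (fiberPartition f hf).part x = fiber f (f x) :=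
  Finpartition.part_eq_of_mem _ (mem_image_of_mem _ (mem_univ _)) (mem_fiber.2 rfl)

lemma fiberPartition_partLabel (P : Finpartition (univ : Finset α)) (e : ι ≃ P.parts)
    (hf : ∀ j, (fiber (partLabel P e) j).Nonempty) : fiberPartition (partLabel P e) hf = P := by
  ext s
  rw [fiberPartition_parts, mem_image]
  simp only [mem_univ, true_and, fiber_partLabel]
  exact ⟨by rintro ⟨j, rfl⟩; exact (e j).2, fun hs => ⟨e.symm ⟨s, hs⟩, by simp⟩⟩

variable {r : ℕ}

lemma card_fiberPartition_parts {f : α → ι} (hf : ∀ j, (fiber f j).Nonempty) :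
    #(fiberPartition f hf).parts = Fintype.card ι := by
  rw [fiberPartition_parts, card_image_of_injective _ (fiber_injective hf), Finset.card_univ]

def toFiberPartition (hr : 0 < r) (f : {f : α → ι // ∀ j, r ≤ #(fiber f j)}) :
    {P : Finpartition (univ : Finset α) // #P.parts = Fintype.card ι ∧ ∀ s ∈ P.parts, r ≤ #s} :=
  ⟨fiberPartition f.1 (fiber_nonempty_of_le hr f.2), card_fiberPartition_parts _, by
    simp only [fiberPartition_parts, mem_image]
    rintro _ ⟨j, -, rfl⟩
    exact f.2 j⟩

noncomputable def toFiberPartition_fiberEquiv (hr : 0 < r)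
    (P : {P : Finpartition (univ : Finset α) //
      #P.parts = Fintype.card ι ∧ ∀ s ∈ P.parts, r ≤ #s}) :
    {f // toFiberPartition hr f = P} ≃ (ι ≃ P.1.parts) where
  toFun f := Equiv.ofBijective (fun j => ⟨fiber f.1.1 j,
      congrArg (·.1.parts) f.2 ▸ mem_image_of_mem _ (mem_univ j)⟩) <| by
    rw [Fintype.bijective_iff_injective_and_card, Fintype.card_coe, P.2.1]
    exact ⟨fun j j' h => fiber_injective (fiber_nonempty_of_le hr f.1.2) (congrArg Subtype.val h),
      rfl⟩
  invFun e :=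
    have hle : ∀ j, r ≤ #(fiber (partLabel P.1 e) j) := fun j => by
      rw [fiber_partLabel]; exact P.2.2 _ (e j).2
    ⟨⟨partLabel P.1 e, hle⟩,
      Subtype.ext (fiberPartition_partLabel _ _ (fiber_nonempty_of_le hr hle))⟩
  left_inv := by
    rintro ⟨⟨f, hf⟩, rfl⟩
    refine Subtype.ext (Subtype.ext (funext fun x => ?_))
    simp only [partLabel, symm_apply_eq, ofBijective_apply]
    exact Subtype.ext (fiberPartition_part (fiber_nonempty_of_le hr hf) x)
  right_inv e := Equiv.ext fun j => Subtype.ext (fiber_partLabel _ _ j)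

theorem card_fiber_ge_eq_card_finpartition_mul (hr : 0 < r) :
    #{f : α → ι | ∀ j, r ≤ #(fiber f j)} =
      Nat.card {P : Finpartition (univ : Finset α) //
        #P.parts = Fintype.card ι ∧ ∀ s ∈ P.parts, r ≤ #s} * (Fintype.card ι)! := by
  have hfiber : ∀ P, Fintype.card {f : {f : α → ι // ∀ j, r ≤ #(fiber f j)} //
      toFiberPartition hr f = P} = (Fintype.card ι)! := fun P => by
    rw [Fintype.card_congr (toFiberPartition_fiberEquiv hr P),
      Fintype.card_equiv (Fintype.equivOfCardEq (by rw [Fintype.card_coe, P.2.1]))]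
  rw [← Fintype.card_subtype, Fintype.card_congr (sigmaFiberEquiv (toFiberPartition hr)).symm,
    Fintype.card_sigma]
  simp only [hfiber, sum_const, Finset.card_univ, smul_eq_mul, Nat.card_eq_fintype_card]

end Partition

theorem stmt_0_general (m r : ℕ) (hr : 0 < r) (p : ℕ) (hp : r * m ≤ p) :
    (stirlingAssoc r p m : ℝ) =
      (p.factorial : ℝ) / (m.factorial : ℝ) *
        ∑ i ∈ Finset.Nat.antidiagonalTuple m (p - r * m),
          1 / ∏ j, ((r + i j).factorial : ℝ) := by
  have hpart := card_fiber_ge_eq_card_finpartition_mul (α := Fin p) (ι := Fin m) hr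
  have hfun := card_fiber_ge_eq_factorial_mul_sum (α := Fin p) (ι := Fin m) r
    (by simpa using hp)
  simp only [Fintype.card_fin, piAntidiag_univ_fin_eq_antidiagonalTuple] at hpart hfun
  rw [hpart, Nat.cast_mul] at hfun
  rw [stirlingAssoc, div_mul_eq_mul_div, eq_div_iff (by positivity)]
  exact hfun

theorem stmt_0 (m r : ℕ) (hm : 0 < m) (hr : 0 < r) (p : ℕ) (hp : r * m ≤ p) :
    (stirlingAssoc r p m : ℝ) =
      (p.factorial : ℝ) / (m.factorial : ℝ) *
        ∑ i ∈ Finset.Nat.antidiagonalTuple m (p - r * m),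
          1 / ∏ j, ((r + i j).factorial : ℝ) :=
  stmt_0_general m r hr p hp
end

section
/- Let m, r be positive integers and p a natural number with p ≥ r·m. Then S_r(p,m) = (p! / (m! · (r!)^m · (p−rm)!)) · M_r(p−rm, m). -/
open MeasureTheory in
/-- `momentM r m k` is the `k`-th moment of the sum of `m` i.i.d. Beta(1,r) random
variables, written as an integral over the cube `[0,1]^m`. -/
noncomputable def momentM (r m k : ℕ) : ℝ :=
  ∫ x in Set.Icc (0 : Fin m → ℝ) 1,
    (∑ i, x i) ^ k * ∏ i, (r : ℝ) * (1 - x i) ^ (r - 1)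


/-!
Label the `m` parts: `S_r(p,m) · m!` counts the maps `Fin p → Fin m` whose fibres all have at
least `r` elements, and sorting these maps by their fibre sizes `k + r` with `∑ k = p - rm` gives
`p! ∑_k ∏_i 1/(k_i + r)!`. On the other side, expanding `(∑ x_i)^K` by the multinomial theorem and
integrating coordinatewise with the Beta integral `∫₀¹ t^a r(1-t)^(r-1) = a! r!/(a+r)!` gives
`M_r(K,m) = K! (r!)^m ∑_k ∏_i 1/(k_i + r)!` with `K = p - rm`.
-/

open Finset MeasureTheory
open scoped Nat

theorem intervalIntegral_pow_mul_one_sub_pow (a b : ℕ) :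
    ∫ x in (0 : ℝ)..1, x ^ a * (1 - x) ^ b = (a ! * b ! : ℝ) / (a + b + 1)! := by
  have hbeta := Complex.betaIntegral_eq_Gamma_mul_div (a + 1) (b + 1)
    (by norm_cast; omega) (by norm_cast; omega)
  rw [Complex.betaIntegral,
    show (a + 1 : ℂ) + (b + 1) = ((a + b + 1 : ℕ) : ℂ) + 1 by push_cast; ring,
    Complex.Gamma_nat_eq_factorial, Complex.Gamma_nat_eq_factorial,
    Complex.Gamma_nat_eq_factorial] at hbeta
  have hint : ∀ x : ℝ, ((x : ℂ) ^ ((a : ℂ) + 1 - 1) * (1 - (x : ℂ)) ^ ((b : ℂ) + 1 - 1))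
      = ((x ^ a * (1 - x) ^ b : ℝ) : ℂ) := by
    intro x
    simp only [add_sub_cancel_right, Complex.cpow_natCast]
    push_cast; rfl
  simp_rw [hint, intervalIntegral.integral_ofReal] at hbeta
  apply Complex.ofReal_injective
  push_cast
  exact hbeta

theorem setIntegral_Icc_pow_mul_beta_one_density (a : ℕ) {r : ℕ} (hr : 0 < r) :
    ∫ t in Set.Icc (0 : ℝ) 1, t ^ a * ((r : ℝ) * (1 - t) ^ (r - 1)) =
      (a ! * r ! : ℝ) / (a + r)! := by
  have hcomm : (fun t : ℝ => t ^ a * ((r : ℝ) * (1 - t) ^ (r - 1)))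
      = fun t => (r : ℝ) * (t ^ a * (1 - t) ^ (r - 1)) := by
    ext; ring
  rw [integral_Icc_eq_integral_Ioc, ← intervalIntegral.integral_of_le zero_le_one, hcomm,
    intervalIntegral.integral_const_mul, intervalIntegral_pow_mul_one_sub_pow,
    add_assoc, Nat.sub_add_cancel hr, ← Nat.mul_factorial_pred hr.ne']
  push_cast
  ring

theorem setIntegral_Icc_fintype_prod {ι : Type*} [Fintype ι] (f : ι → ℝ → ℝ) (a b : ι → ℝ) :
    ∫ x in Set.Icc a b, ∏ i, f i (x i) = ∏ i, ∫ t in Set.Icc (a i) (b i), f i t := by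
  rw [← Set.pi_univ_Icc, volume_pi, Measure.restrict_pi_pi, integral_fintype_prod_eq_prod]

theorem momentM_eq_sum {r : ℕ} (hr : 0 < r) (m K : ℕ) :
    momentM r m K = K ! * r ! ^ m * ∑ k ∈ piAntidiag univ K, ∏ i : Fin m, ((k i + r)! : ℝ)⁻¹ := by
  have hexpand : ∀ x : Fin m → ℝ, (∑ i, x i) ^ K * ∏ i, (r : ℝ) * (1 - x i) ^ (r - 1)
      = ∑ k ∈ piAntidiag univ K,
          (Nat.multinomial univ k : ℝ) * ∏ i, (x i ^ k i * ((r : ℝ) * (1 - x i) ^ (r - 1))) := by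
    intro x
    simp_rw [sum_pow_eq_sum_piAntidiag, sum_mul, mul_assoc, prod_mul_distrib]
  have hint : ∀ k : Fin m → ℕ, Integrable
      (fun x : Fin m → ℝ => ∏ i, (x i ^ k i * ((r : ℝ) * (1 - x i) ^ (r - 1))))
      (volume.restrict (Set.Icc 0 1)) :=
    fun k => (by fun_prop : Continuous _).continuousOn.integrableOn_compact isCompact_Icc
  simp_rw [momentM, hexpand]
  rw [integral_finsetSum _ fun k _ => (hint k).const_mul _, mul_sum]
  refine sum_congr rfl fun k hk => ?_
  rw [integral_const_mul,
    setIntegral_Icc_fintype_prod fun i t => t ^ k i * ((r : ℝ) * (1 - t) ^ (r - 1))]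
  simp only [Pi.zero_apply, Pi.one_apply, setIntegral_Icc_pow_mul_beta_one_density _ hr]
  have hspec := Nat.multinomial_spec univ k
  rw [(mem_piAntidiag.1 hk).1] at hspec
  simp only [div_eq_mul_inv, prod_mul_distrib, prod_const, card_univ, Fintype.card_fin]
  rw [← hspec]
  push_cast
  ring

theorem sum_single_eq_equivFunOnFinite_symm_iff {α β : Type*} [Fintype α] [Fintype β]
    [DecidableEq β] (g : α → β) (k : β → ℕ) :
    ∑ a, Finsupp.single (g a) 1 = Finsupp.equivFunOnFinite.symm k ↔
      ∀ b, #{a | g a = b} = k b := by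
  simp only [Finsupp.ext_iff, Finsupp.finsetSum_apply, Finsupp.single_apply, sum_boole,
    Nat.cast_id]
  rfl

theorem card_fiber_card_eq_multinomial {α β : Type*} [Fintype α] [DecidableEq α] [Fintype β]
    [DecidableEq β] (k : β → ℕ) (hk : ∑ b, k b = Fintype.card α) :
    #{g : α → β | ∀ b, #{a | g a = b} = k b} = Nat.multinomial univ k := by
  open MvPolynomial in
  have hpow : (∑ b, X b : MvPolynomial β ℕ) ^ Fintype.card α
      = ∑ g : α → β, monomial (∑ a, Finsupp.single (g a) 1) 1 := by
    rw [← card_univ, ← prod_const, prod_univ_sum, Fintype.piFinset_univ]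
    simp only [monomial_sum_one, X]
  have hcoeff := coeff_sum_X_pow_of_fintype (R := ℕ) (Finsupp.equivFunOnFinite.symm k)
    (Fintype.card α)
  rw [hpow, coeff_sum] at hcoeff
  simp only [coeff_monomial, sum_boole, sum_single_eq_equivFunOnFinite_symm_iff, Nat.cast_id]
    at hcoeff
  rw [hcoeff, Finsupp.sum_fintype _ _ (fun _ => rfl)]
  simp only [Finsupp.equivFunOnFinite_symm_apply_apply, hk, if_true]
  exact (Finsupp.multinomial_of_support_subset (subset_univ _)).symm

theorem card_filter_fiber_card {α β : Type*} [Fintype α] [DecidableEq α] [Fintype β]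
    [DecidableEq β] (Q : (β → ℕ) → Prop) [DecidablePred Q] :
    #{g : α → β | Q fun b => #{a | g a = b}} =
      ∑ k ∈ piAntidiag univ (Fintype.card α) with Q k, Nat.multinomial univ k := by
  have hsum (g : α → β) : ∑ b, #{a | g a = b} = Fintype.card α :=
    (card_eq_sum_card_fiberwise fun a _ => mem_univ (g a)).symm
  rw [card_eq_sum_card_fiberwise (f := fun g b => #{a | g a = b})
    (t := {k ∈ piAntidiag univ (Fintype.card α) | Q k}) fun g hg => by simpa [hsum] using hg]
  refine sum_congr rfl fun k hk => ?_
  rw [mem_filter, mem_piAntidiag] at hk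
  rw [← card_fiber_card_eq_multinomial k hk.1.1, filter_filter]
  congr 1
  refine filter_congr fun g _ => ⟨fun h b => congrFun h.2 b, fun h => ?_⟩
  obtain rfl : (fun b => #{a | g a = b}) = k := funext h
  exact ⟨hk.2, rfl⟩

theorem sum_piAntidiag_filter_le {ι M : Type*} [Fintype ι] [DecidableEq ι] [AddCommMonoid M]
    (c : ι → ℕ) (N : ℕ) (f : (ι → ℕ) → M) :
    ∑ n ∈ piAntidiag univ (N + ∑ i, c i) with ∀ i, c i ≤ n i, f n =
      ∑ k ∈ piAntidiag univ N, f (k + c) := by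
  have hcancel (n : ι → ℕ) (hn : ∀ i, c i ≤ n i) : n - c + c = n :=
    funext fun i => tsub_add_cancel_of_le (hn i)
  refine sum_nbij' (fun n => n - c) (fun k => k + c) (fun n hn => ?_) (fun k hk => ?_)
    (fun n hn => hcancel n (mem_filter.1 hn).2) (fun k _ => add_tsub_cancel_right k c)
    (fun n hn => by rw [hcancel n (mem_filter.1 hn).2])
  · simp only [mem_filter, mem_piAntidiag, mem_univ, implies_true, and_true] at hn ⊢
    rw [← add_left_inj (∑ i, c i), ← hn.1, ← sum_add_distrib]
    exact congrArg (univ.sum ·) (hcancel n hn.2)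
  · simp only [mem_filter, mem_piAntidiag, mem_univ, implies_true, and_true] at hk ⊢
    exact ⟨by rw [← hk, ← sum_add_distrib]; rfl, fun i => Nat.le_add_left _ _⟩

theorem Finpartition.parts_eq_image_part {α : Type*} [DecidableEq α] {s : Finset α}
    (P : Finpartition s) : P.parts = s.image P.part := by
  ext t
  refine ⟨fun ht => ?_, ?_⟩
  · obtain ⟨a, ha, rfl⟩ := P.part_surjOn ht
    exact mem_image_of_mem _ ha
  · intro ht
    obtain ⟨a, ha, rfl⟩ := mem_image.1 ht
    exact P.part_mem.2 ha

theorem Finpartition.ext_part {α : Type*} [DecidableEq α] {s : Finset α} {P Q : Finpartition s}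
    (h : ∀ a, P.part a = Q.part a) : P = Q :=
  Finpartition.ext (by rw [P.parts_eq_image_part, Q.parts_eq_image_part, funext h])

section KerPartition

variable {α β : Type*} [Fintype α] [DecidableEq α] [DecidableEq β]

def kerPartition (g : α → β) : Finpartition (univ : Finset α) :=
  Finpartition.ofSetoid (Setoid.ker g)

theorem part_kerPartition (g : α → β) (a : α) :
    (kerPartition g).part a = ({b | g b = g a} : Finset α) := by
  ext b
  rw [kerPartition, Finpartition.mem_part_ofSetoid_iff_rel, mem_filter, Setoid.ker_def]
  simp [eq_comm]

theorem kerPartition_eq_iff (g : α → β) (P : Finpartition (univ : Finset α)) :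
    kerPartition g = P ↔ ∀ a, P.part a = ({b | g b = g a} : Finset α) := by
  refine ⟨fun h a => h ▸ part_kerPartition g a, fun h => ?_⟩
  exact Finpartition.ext_part fun a => (part_kerPartition g a).trans (h a).symm

theorem card_kerPartition_eq [Fintype β] (P : Finpartition (univ : Finset α)) :
    #{g : α → β | kerPartition g = P} = (Fintype.card β).descFactorial #P.parts := by
  have hpart (a : α) : P.part a ∈ P.parts := P.part_mem.2 (mem_univ a)
  rw [← Fintype.card_coe P.parts, ← Fintype.card_embedding_eq, ← card_univ]
  symm
  refine card_bij (fun e _ => fun a => e ⟨P.part a, hpart a⟩) (fun e _ => ?_) ?_ ?_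
  · rw [mem_filter, kerPartition_eq_iff]
    refine ⟨mem_univ _, fun a => ?_⟩
    ext b
    simp only [mem_filter, mem_univ, true_and, e.injective.eq_iff, Subtype.mk.injEq]
    exact P.mem_part_iff_part_eq_part (mem_univ b) (mem_univ a)
  · intro e _ e' _ h
    ext ⟨s, hs⟩
    obtain ⟨a, -, rfl⟩ := P.part_surjOn hs
    exact congrFun h a
  · intro g hg
    rw [mem_filter, kerPartition_eq_iff] at hg
    have hg_eq_iff (a b : α) : g b = g a ↔ P.part b = P.part a := by
      rw [← P.mem_part_iff_part_eq_part (mem_univ b) (mem_univ a), hg.2 a]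
      simp
    choose c hc using fun s : P.parts => P.nonempty_of_mem_parts s.2
    have hpart_c (s : P.parts) : P.part (c s) = s := P.part_eq_of_mem s.2 (hc s)
    refine ⟨⟨g ∘ c, fun s t hst => ?_⟩, mem_univ _, funext fun a => ?_⟩
    · rw [Subtype.ext_iff, ← hpart_c s, ← hpart_c t]
      exact (hg_eq_iff (c t) (c s)).1 hst
    · exact (hg_eq_iff a _).2 (hpart_c _)

theorem parts_kerPartition (g : α → β) :
    (kerPartition g).parts = (univ.image g).image fun b => ({a | g a = b} : Finset α) := by
  rw [Finpartition.parts_eq_image_part, image_image]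
  exact image_congr fun a _ => part_kerPartition g a

theorem kerPartition_card_parts_and_le_card_iff [Fintype β] {r : ℕ} (hr : 0 < r) (g : α → β) :
    (#(kerPartition g).parts = Fintype.card β ∧ ∀ s ∈ (kerPartition g).parts, r ≤ #s) ↔
      ∀ b, r ≤ #{a | g a = b} := by
  rw [parts_kerPartition]
  constructor
  · rintro ⟨hcard, hle⟩ b
    have hsurj : univ.image g = univ :=
      eq_univ_of_card _ (le_antisymm (card_le_univ _) (hcard ▸ card_image_le))
    exact hle _ (mem_image_of_mem _ (hsurj ▸ mem_univ b))
  · intro hle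
    have hne (b : β) : ({a | g a = b} : Finset α).Nonempty := card_pos.1 (hr.trans_le (hle b))
    have hsurj : univ.image g = univ := eq_univ_of_forall fun b => by
      obtain ⟨a, ha⟩ := hne b
      exact mem_image.2 ⟨a, mem_univ a, (mem_filter.1 ha).2⟩
    refine ⟨?_, ?_⟩
    · rw [hsurj, card_image_of_injective, card_univ]
      intro b b' h
      obtain ⟨a, ha⟩ := hne b
      have ha' : a ∈ ({a | g a = b'} : Finset α) := by simpa only [h] using ha
      exact (mem_filter.1 ha).2.symm.trans (mem_filter.1 ha').2
    · intro s hs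
      obtain ⟨b, -, rfl⟩ := mem_image.1 hs
      exact hle b

theorem card_filter_kerPartition [Fintype β] (Q : Finpartition (univ : Finset α) → Prop)
    [DecidablePred Q] :
    #{g : α → β | Q (kerPartition g)} =
      ∑ P : Finpartition (univ : Finset α) with Q P, (Fintype.card β).descFactorial #P.parts := by
  classical
  rw [card_eq_sum_card_fiberwise (f := kerPartition) (t := {P | Q P})
    fun g hg => by simpa using hg]
  refine sum_congr rfl fun P hP => ?_
  rw [← card_kerPartition_eq P]
  congr 1
  ext g
  simp only [mem_filter, mem_univ, true_and, and_iff_right_iff_imp]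
  rintro rfl
  simpa using hP

end KerPartition

theorem card_fiber_card_le_eq_stirlingAssoc_mul_factorial {r : ℕ} (hr : 0 < r) (p m : ℕ) :
    #{g : Fin p → Fin m | ∀ j, r ≤ #{i | g i = j}} = stirlingAssoc r p m * m ! := by
  have hgood : #{g : Fin p → Fin m | ∀ j, r ≤ #{i | g i = j}} =
      #{g : Fin p → Fin m | #(kerPartition g).parts = m ∧ ∀ s ∈ (kerPartition g).parts, r ≤ #s} :=
    congrArg card <| filter_congr fun g _ => by
      rw [← kerPartition_card_parts_and_le_card_iff hr, Fintype.card_fin]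
  refine hgood.trans
    ((card_filter_kerPartition fun P => #P.parts = m ∧ ∀ s ∈ P.parts, r ≤ #s).trans ?_)
  rw [Fintype.card_fin, stirlingAssoc, Nat.card_eq_fintype_card,
    Fintype.card_subtype, card_eq_sum_ones, sum_mul, one_mul]
  refine sum_congr rfl fun P hP => ?_
  rw [(mem_filter.1 hP).2.1, Nat.descFactorial_self]

theorem Nat.cast_multinomial {ι K : Type*} [Field K] [CharZero K] (s : Finset ι) (f : ι → ℕ) :
    (Nat.multinomial s f : K) = (∑ i ∈ s, f i)! * ∏ i ∈ s, ((f i)! : K)⁻¹ := by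
  rw [← Nat.multinomial_spec s f, Nat.cast_mul, Nat.cast_prod, mul_right_comm,
    ← prod_mul_distrib,
    prod_eq_one fun i _ => mul_inv_cancel₀ (Nat.cast_ne_zero.2 (Nat.factorial_ne_zero _)), one_mul]

theorem stirlingAssoc_mul_factorial {r : ℕ} (hr : 0 < r) (m K : ℕ) :
    (stirlingAssoc r (K + r * m) m * m ! : ℝ) =
      (K + r * m)! * ∑ k ∈ piAntidiag univ K, ∏ i : Fin m, ((k i + r)! : ℝ)⁻¹ := by
  have hsum : K + r * m = K + ∑ _i : Fin m, r := by simp [mul_comm]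
  rw [← Nat.cast_mul, ← card_fiber_card_le_eq_stirlingAssoc_mul_factorial hr,
    card_filter_fiber_card fun k : Fin m → ℕ => ∀ j, r ≤ k j, Fintype.card_fin, hsum,
    Nat.cast_sum]
  -- `convert` only reconciles two `Decidable` instances of the filter: `Fin m` has its own.
  convert (sum_piAntidiag_filter_le (fun _ => r) K _).trans ?_ using 3
  rw [mul_sum]
  refine sum_congr rfl fun k hk => ?_
  simp only [Nat.cast_multinomial, Pi.add_apply]
  rw [sum_add_distrib, (mem_piAntidiag.1 hk).1]

theorem stmt_1_general (m r : ℕ) (hr : 0 < r) (p : ℕ) (hp : r * m ≤ p) :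
    (stirlingAssoc r p m : ℝ) =
      (p.factorial : ℝ) /
          ((m.factorial : ℝ) * (r.factorial : ℝ) ^ m * ((p - r * m).factorial : ℝ)) *
        momentM r m (p - r * m) := by
  obtain ⟨K, rfl⟩ : ∃ K, p = K + r * m := ⟨p - r * m, (Nat.sub_add_cancel hp).symm⟩
  have hS := stirlingAssoc_mul_factorial hr m K
  rw [Nat.add_sub_cancel, momentM_eq_sum hr]
  field_simp
  simpa only [one_div] using hS

theorem stmt_1 (m r : ℕ) (hm : 0 < m) (hr : 0 < r) (p : ℕ) (hp : r * m ≤ p) :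
    (stirlingAssoc r p m : ℝ) =
      (p.factorial : ℝ) /
          ((m.factorial : ℝ) * (r.factorial : ℝ) ^ m * ((p - r * m).factorial : ℝ)) *
        momentM r m (p - r * m) :=
  stmt_1_general m r hr p hp
end

section
/- Let k ≥ 2 be an integer, let a ∈ (0,1), and set c = (a^{k−1}(ak − a − k) + 1)/(1−a)². Define f(x) = a^k + k·a^{k−1}(x−a) + c·(x−a)². Then f(x) ≥ x^k for all x ∈ [0,1]. -/
/-!
Writing `k = m + 2`, the Taylor expansion of `x ^ k` at `a` has the exact form
`x ^ k = a ^ k + k a ^ (k - 1) (x - a) + (x - a) ^ 2 Q(x)` with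
`Q(x) = ∑_{i ≤ m} (i + 1) a ^ i x ^ (m - i)`. Evaluating at `x = 1` shows that the constant `c`
is `Q(1)`, and `Q` has nonnegative coefficients, so `Q(x) ≤ Q(1)` on `[0, 1]`.
-/

open Finset

def powQuadRemainder {R : Type*} [CommSemiring R] (a : R) (m : ℕ) (x : R) : R :=
  ∑ i ∈ range (m + 1), ((i : R) + 1) * a ^ i * x ^ (m - i)

lemma powQuadRemainder_succ {R : Type*} [CommSemiring R] (a : R) (m : ℕ) (x : R) :
    powQuadRemainder a (m + 1) x = x * powQuadRemainder a m x + ((m : R) + 2) * a ^ (m + 1) := by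
  rw [powQuadRemainder, sum_range_succ, powQuadRemainder, mul_sum, Nat.sub_self, pow_zero,
    mul_one]
  congr 1
  · refine sum_congr rfl fun i hi => ?_
    rw [show m + 1 - i = m - i + 1 by have := mem_range.mp hi; omega, pow_succ]
    ring
  · push_cast; ring

lemma pow_eq_taylor_add_sq_mul_powQuadRemainder {R : Type*} [CommRing R] (a x : R) (m : ℕ) :
    x ^ (m + 2) = a ^ (m + 2) + ((m : R) + 2) * a ^ (m + 1) * (x - a) +
      (x - a) ^ 2 * powQuadRemainder a m x := by
  induction m with
  | zero => simp [powQuadRemainder]; ring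
  | succ m ih =>
    rw [powQuadRemainder_succ, pow_succ, ih]
    push_cast
    ring

lemma monotoneOn_powQuadRemainder {R : Type*} [CommSemiring R] [PartialOrder R]
    [IsOrderedRing R] {a : R} (ha : 0 ≤ a) (m : ℕ) :
    MonotoneOn (powQuadRemainder a m) (Set.Ici 0) := fun _ hx _ _ hxy =>
  sum_le_sum fun _ _ => mul_le_mul_of_nonneg_left (pow_le_pow_left₀ hx hxy _)
    (mul_nonneg (add_nonneg (Nat.cast_nonneg _) zero_le_one) (pow_nonneg ha _))

lemma powQuadRemainder_one {K : Type*} [Field K] {a : K} (ha : a ≠ 1) (m : ℕ) :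
    powQuadRemainder a m 1 =
      (a ^ (m + 1) * (a * (m + 2) - a - (m + 2)) + 1) / (1 - a) ^ 2 := by
  have h := pow_eq_taylor_add_sq_mul_powQuadRemainder a 1 m
  rw [one_pow] at h
  rw [eq_div_iff (pow_ne_zero 2 (sub_ne_zero.mpr ha.symm))]
  linear_combination -h

theorem stmt_2 (k : ℕ) (hk : 2 ≤ k) (a : ℝ) (ha : a ∈ Set.Ioo (0 : ℝ) 1) :
    ∀ x ∈ Set.Icc (0 : ℝ) 1,
      x ^ k ≤
        a ^ k + (k : ℝ) * a ^ (k - 1) * (x - a) +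
          (a ^ (k - 1) * (a * k - a - k) + 1) / (1 - a) ^ 2 * (x - a) ^ 2 := by
  obtain ⟨m, rfl⟩ : ∃ m, k = m + 2 := ⟨k - 2, by omega⟩
  rintro x ⟨hx0, hx1⟩
  have hR : powQuadRemainder a m x ≤ powQuadRemainder a m 1 :=
    monotoneOn_powQuadRemainder ha.1.le m hx0 (Set.mem_Ici.mpr zero_le_one) hx1
  rw [pow_eq_taylor_add_sq_mul_powQuadRemainder a x m, show m + 2 - 1 = m + 1 from rfl]
  push_cast
  rw [← powQuadRemainder_one ha.2.ne m]
  linarith [mul_le_mul_of_nonneg_left hR (sq_nonneg (x - a))]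
end

section
/- Let r, m be positive integers and k a natural number. Then m^k/(r+1)^k ≤ M_r(k,m) ≤ m^k/(r+1)^k + m^{k−1} · ((r+1)^k − 1 − k·r) / ((r+1)^k · r · (r+2)). -/
open MeasureTheory ProbabilityTheory Set
open scoped ENNReal

noncomputable def powSecondDivDiff (c t : ℝ) : ℕ → ℝ
  | 0 => 0
  | k + 1 => t * powSecondDivDiff c t k + k * c ^ (k - 1)

-- `c ^ (k - 1)` truncates at `k = 0`, where it is multiplied by `k = 0` anyway.
lemma pow_eq_add_sq_mul_powSecondDivDiff (c t : ℝ) (k : ℕ) :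
    t ^ k = c ^ k + k * c ^ (k - 1) * (t - c) + (t - c) ^ 2 * powSecondDivDiff c t k := by
  induction k with
  | zero => simp [powSecondDivDiff]
  | succ k ih =>
    rw [pow_succ, ih, powSecondDivDiff]
    rcases k with _ | k
    · simp [powSecondDivDiff]
    · simp only [Nat.add_sub_cancel]
      push_cast
      ring

lemma powSecondDivDiff_nonneg {c t : ℝ} (hc : 0 ≤ c) (ht : 0 ≤ t) (k : ℕ) :
    0 ≤ powSecondDivDiff c t k := by
  induction k with
  | zero => exact le_rfl
  | succ k ih => rw [powSecondDivDiff]; positivity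

lemma powSecondDivDiff_mono {c t t' : ℝ} (hc : 0 ≤ c) (ht : 0 ≤ t) (htt' : t ≤ t') (k : ℕ) :
    powSecondDivDiff c t k ≤ powSecondDivDiff c t' k := by
  induction k with
  | zero => exact le_rfl
  | succ k ih =>
    have := powSecondDivDiff_nonneg hc ht k
    have := ht.trans htt'
    simp only [powSecondDivDiff]
    gcongr

lemma sq_mul_powSecondDivDiff_mul_self (c q : ℝ) (k : ℕ) :
    (q * c - c) ^ 2 * powSecondDivDiff c (q * c) k = c ^ k * (q ^ k - 1 - k * (q - 1)) := by
  rcases k with _ | k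
  · simp [powSecondDivDiff]
  · have h := pow_eq_add_sq_mul_powSecondDivDiff c (q * c) (k + 1)
    rw [Nat.add_sub_cancel] at h
    linear_combination -h

section BoundedMoments

variable {Ω : Type*} [MeasurableSpace Ω] {P : Measure Ω} [IsProbabilityMeasure P] {X : Ω → ℝ}
  {b : ℝ}

lemma integrable_pow_of_ae_mem_Icc (hXm : AEMeasurable X P) (hX : ∀ᵐ ω ∂P, X ω ∈ Icc 0 b)
    (k : ℕ) : Integrable (fun ω => X ω ^ k) P :=
  memLp_one_iff_integrable.1 <| memLp_of_bounded (a := 0) (b := b ^ k)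
    (hX.mono fun _ hω => ⟨pow_nonneg hω.1 k, pow_le_pow_left₀ hω.1 hω.2 k⟩)
    (hXm.pow_const k).aestronglyMeasurable 1

lemma pow_integral_le_integral_pow (hXm : AEMeasurable X P) (hX : ∀ᵐ ω ∂P, X ω ∈ Icc 0 b)
    (k : ℕ) : P[X] ^ k ≤ ∫ ω, X ω ^ k ∂P :=
  (convexOn_pow k).map_integral_le (continuous_pow k).continuousOn isClosed_Ici
    (hX.mono fun _ hω => hω.1) (by simpa using integrable_pow_of_ae_mem_Icc hXm hX 1)
    (integrable_pow_of_ae_mem_Icc hXm hX k)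

lemma integral_pow_le_pow_integral_add (hXm : AEMeasurable X P) (hX : ∀ᵐ ω ∂P, X ω ∈ Icc 0 b)
    (k : ℕ) : ∫ ω, X ω ^ k ∂P ≤ P[X] ^ k + powSecondDivDiff P[X] b k * Var[X; P] := by
  set c := P[X]
  have hc : 0 ≤ c := integral_nonneg_of_ae (hX.mono fun _ hω => hω.1)
  have hX2 : MemLp X 2 P := memLp_of_bounded hX hXm.aestronglyMeasurable 2
  have hpt : ∀ᵐ ω ∂P, X ω ^ k ≤
      c ^ k + k * c ^ (k - 1) * (X ω - c) + powSecondDivDiff c b k * (X ω - c) ^ 2 := by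
    filter_upwards [hX] with ω hω
    rw [pow_eq_add_sq_mul_powSecondDivDiff c (X ω) k, mul_comm ((X ω - c) ^ 2)]
    gcongr
    exact powSecondDivDiff_mono hc hω.1 hω.2 k
  have hX1 : Integrable X P := hX2.integrable one_le_two
  have hsq : Integrable (fun ω => (X ω - c) ^ 2) P := (hX2.sub (memLp_const c)).integrable_sq
  calc ∫ ω, X ω ^ k ∂P
      ≤ ∫ ω, c ^ k + k * c ^ (k - 1) * (X ω - c) + powSecondDivDiff c b k * (X ω - c) ^ 2 ∂P :=
        integral_mono_ae (integrable_pow_of_ae_mem_Icc hXm hX k) (by fun_prop) hpt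
    _ = c ^ k + powSecondDivDiff c b k * Var[X; P] := by
        rw [integral_add, integral_add, integral_const_mul, integral_const_mul, integral_sub hX1,
          variance_eq_integral hXm]
        · simp [c]
        all_goals fun_prop

end BoundedMoments

lemma Set.indicator_univ_pi_prod {ι : Type*} [Fintype ι] {α : ι → Type*} {R : Type*}
    [CommMonoidWithZero R] (s : ∀ i, Set (α i)) (f : ∀ i, α i → R) :
    (univ.pi s).indicator (fun x => ∏ i, f i (x i)) =
      fun x => ∏ i, (s i).indicator (f i) (x i) := by
  ext x
  by_cases h : ∀ i, x i ∈ s i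
  · simp [h]
  · obtain ⟨i, hi⟩ := not_forall.1 h
    rw [indicator_of_notMem (by simpa using h),
      Finset.prod_eq_zero (Finset.mem_univ i) (indicator_of_notMem hi (f i))]

theorem MeasureTheory.Measure.pi_withDensity {ι : Type*} [Fintype ι] {α : ι → Type*}
    [∀ i, MeasurableSpace (α i)] (μ : ∀ i, Measure (α i)) [∀ i, IsProbabilityMeasure (μ i)]
    {f : ∀ i, α i → ℝ≥0∞} (hf : ∀ i, Measurable (f i))
    [∀ i, SigmaFinite ((μ i).withDensity (f i))] :
    Measure.pi (fun i => (μ i).withDensity (f i)) =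
      (Measure.pi μ).withDensity fun x => ∏ i, f i (x i) := by
  refine Measure.pi_eq fun s hs => ?_
  have hfs i : Measurable ((s i).indicator (f i)) := (hf i).indicator (hs i)
  rw [withDensity_apply _ (.univ_pi hs), ← lintegral_indicator (.univ_pi hs),
    Set.indicator_univ_pi_prod, lintegral_prod_eq_prod_lintegral_of_indepFun _ _
      (iIndepFun_pi fun i => (hfs i).aemeasurable) fun i => (hfs i).comp (measurable_pi_apply i)]
  refine Finset.prod_congr rfl fun i _ => ?_
  rw [withDensity_apply _ (hs i), ← lintegral_indicator (hs i)]
  exact (measurePreserving_eval μ i).lintegral_comp (hfs i)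

instance : IsProbabilityMeasure (volume.restrict (Icc (0 : ℝ) 1)) :=
  ⟨by simp⟩

noncomputable def betaOneMeasure (r : ℕ) : Measure ℝ :=
  (volume.restrict (Icc 0 1)).withDensity fun t => ENNReal.ofReal (r * (1 - t) ^ (r - 1))

section BetaOne

variable {r : ℕ}

lemma mul_one_sub_pow_nonneg_of_mem_Icc {t : ℝ} (ht : t ∈ Icc (0 : ℝ) 1) :
    0 ≤ (r : ℝ) * (1 - t) ^ (r - 1) := by
  have : 0 ≤ 1 - t := sub_nonneg.2 ht.2
  positivity

instance (r : ℕ) : IsFiniteMeasure (betaOneMeasure r) :=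
  isFiniteMeasure_withDensity_ofReal
    (Continuous.integrableOn_Icc (f := fun t : ℝ => r * (1 - t) ^ (r - 1)) (by fun_prop)).2

lemma ae_mem_Icc_betaOneMeasure (r : ℕ) : ∀ᵐ t ∂betaOneMeasure r, t ∈ Icc (0 : ℝ) 1 :=
  withDensity_absolutelyContinuous _ _ (ae_restrict_mem measurableSet_Icc)

lemma memLp_id_betaOneMeasure (r : ℕ) (p : ℝ≥0∞) : MemLp id p (betaOneMeasure r) :=
  memLp_of_bounded (ae_mem_Icc_betaOneMeasure r) aestronglyMeasurable_id p

lemma integral_betaOneMeasure (r : ℕ) (f : ℝ → ℝ) :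
    ∫ t, f t ∂betaOneMeasure r = ∫ t in (0 : ℝ)..1, r * (1 - t) ^ (r - 1) * f t := by
  rw [betaOneMeasure, integral_withDensity_eq_integral_toReal_smul (by fun_prop)
      (.of_forall fun _ => ENNReal.ofReal_lt_top),
    intervalIntegral.integral_of_le zero_le_one, ← integral_Icc_eq_integral_Ioc]
  refine setIntegral_congr_fun measurableSet_Icc fun t ht => ?_
  rw [ENNReal.toReal_ofReal (mul_one_sub_pow_nonneg_of_mem_Icc ht), smul_eq_mul]

lemma integral_one_sub_pow_betaOneMeasure (hr : 0 < r) (p : ℕ) :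
    ∫ t, (1 - t) ^ p ∂betaOneMeasure r = r / (r + p) := by
  have hexp : r - 1 + p + 1 = r + p := by omega
  have hpos : r + p ≠ 0 := by omega
  simp_rw [integral_betaOneMeasure, mul_assoc, ← pow_add]
  rw [intervalIntegral.integral_const_mul,
    intervalIntegral.integral_comp_sub_left (fun t => t ^ (r - 1 + p)) 1]
  simp only [sub_self, sub_zero, integral_pow]
  rw [← Nat.cast_add, ← Nat.cast_add_one, hexp]
  simp [div_eq_mul_inv, zero_pow hpos]

lemma isProbabilityMeasure_betaOneMeasure (hr : 0 < r) :
    IsProbabilityMeasure (betaOneMeasure r) := by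
  rw [isProbabilityMeasure_iff_real]
  simpa [hr.ne'] using integral_one_sub_pow_betaOneMeasure hr 0

lemma integral_id_betaOneMeasure (hr : 0 < r) : ∫ t, t ∂betaOneMeasure r = 1 / (r + 1) := by
  have := isProbabilityMeasure_betaOneMeasure hr
  have h := integral_one_sub_pow_betaOneMeasure hr 1
  have hid : Integrable (fun t : ℝ => t) (betaOneMeasure r) :=
    (memLp_id_betaOneMeasure r 1).integrable le_rfl
  simp only [pow_one] at h
  rw [integral_sub (integrable_const 1) hid] at h
  simp only [integral_const, probReal_univ, smul_eq_mul, mul_one, Nat.cast_one] at h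
  have : (r : ℝ) + 1 ≠ 0 := by positivity
  field_simp at h ⊢
  linarith

lemma variance_id_betaOneMeasure (hr : 0 < r) :
    Var[id; betaOneMeasure r] = r / ((r + 1) ^ 2 * (r + 2)) := by
  have := isProbabilityMeasure_betaOneMeasure hr
  rw [← variance_const_sub aemeasurable_id.aestronglyMeasurable 1, variance_eq_sub
    (X := fun t => 1 - id t) ((memLp_const 1).sub (memLp_id_betaOneMeasure r 2))]
  have h1 := integral_one_sub_pow_betaOneMeasure hr 1
  have h2 := integral_one_sub_pow_betaOneMeasure hr 2
  simp only [pow_one] at h1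
  simp only [id, Pi.pow_apply, h1, h2]
  have : (r : ℝ) + 1 ≠ 0 := by positivity
  have : (r : ℝ) + 2 ≠ 0 := by positivity
  field_simp
  ring

variable {ι : Type*} [Fintype ι]

lemma ae_sum_mem_Icc_pi_betaOneMeasure (hr : 0 < r) :
    ∀ᵐ x ∂Measure.pi (fun _ : ι => betaOneMeasure r),
      ∑ i, x i ∈ Icc 0 (Fintype.card ι : ℝ) := by
  have := isProbabilityMeasure_betaOneMeasure hr
  have hx : ∀ᵐ x ∂Measure.pi (fun _ : ι => betaOneMeasure r), ∀ i, x i ∈ Icc (0 : ℝ) 1 :=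
    ae_all_iff.2 fun i =>
      (Measure.quasiMeasurePreserving_eval _ i).ae (ae_mem_Icc_betaOneMeasure r)
  filter_upwards [hx] with x hx
  refine ⟨Finset.sum_nonneg fun i _ => (hx i).1, ?_⟩
  simpa using Finset.sum_le_sum fun i (_ : i ∈ Finset.univ) => (hx i).2

lemma integral_sum_pi_betaOneMeasure (hr : 0 < r) :
    ∫ x, ∑ i, x i ∂Measure.pi (fun _ : ι => betaOneMeasure r) =
      Fintype.card ι / (r + 1) := by
  have := isProbabilityMeasure_betaOneMeasure hr
  rw [integral_finsetSum (f := fun i (x : ι → ℝ) => x i) _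
    fun i _ => integrable_eval ((memLp_id_betaOneMeasure r 1).integrable le_rfl)]
  simp [integral_eval, integral_id_betaOneMeasure hr, div_eq_mul_inv]

lemma variance_sum_pi_betaOneMeasure (hr : 0 < r) :
    Var[fun x => ∑ i, x i; Measure.pi (fun _ : ι => betaOneMeasure r)] =
      Fintype.card ι * (r / ((r + 1) ^ 2 * (r + 2))) := by
  have := isProbabilityMeasure_betaOneMeasure hr
  have h := variance_sum_pi (X := fun (_ : ι) => id) fun _ => memLp_id_betaOneMeasure r 2
  simp only [variance_id_betaOneMeasure hr, Finset.sum_const, Finset.card_univ,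
    nsmul_eq_mul] at h
  rw [← h]
  congr 1
  ext x
  simp [Finset.sum_apply]

end BetaOne

lemma momentM_eq_integral_pi (r m k : ℕ) :
    momentM r m k = ∫ x, (∑ i, x i) ^ k ∂Measure.pi fun _ : Fin m => betaOneMeasure r := by
  rw [momentM, betaOneMeasure, Measure.pi_withDensity _ (fun _ => by fun_prop),
    integral_withDensity_eq_integral_toReal_smul (by fun_prop)
      (.of_forall fun _ => ENNReal.prod_lt_top fun _ _ => ENNReal.ofReal_lt_top),
    ← Measure.restrict_pi_pi, ← volume_pi, pi_univ_Icc]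
  refine setIntegral_congr_fun measurableSet_Icc fun x hx => ?_
  rw [ENNReal.toReal_prod, smul_eq_mul, mul_comm]
  congr 1
  exact Finset.prod_congr rfl fun i _ =>
    (ENNReal.toReal_ofReal (mul_one_sub_pow_nonneg_of_mem_Icc ⟨hx.1 i, hx.2 i⟩)).symm

theorem stmt_3 (r m : ℕ) (hr : 0 < r) (hm : 0 < m) (k : ℕ) :
    (m : ℝ) ^ k / ((r : ℝ) + 1) ^ k ≤ momentM r m k ∧
      momentM r m k ≤
        (m : ℝ) ^ k / ((r : ℝ) + 1) ^ k +
          (m : ℝ) ^ ((k : ℤ) - 1) *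
            ((((r : ℝ) + 1) ^ k - 1 - (k : ℝ) * r) /
              (((r : ℝ) + 1) ^ k * r * ((r : ℝ) + 2))) := by
  have := isProbabilityMeasure_betaOneMeasure hr
  have hS : AEMeasurable (fun x : Fin m → ℝ => ∑ i, x i)
      (Measure.pi fun _ => betaOneMeasure r) := by fun_prop
  have hSb := ae_sum_mem_Icc_pi_betaOneMeasure (ι := Fin m) hr
  have hmean := integral_sum_pi_betaOneMeasure (ι := Fin m) hr
  have hvar := variance_sum_pi_betaOneMeasure (ι := Fin m) hr
  simp only [Fintype.card_fin] at hSb hmean hvar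
  rw [momentM_eq_integral_pi, ← div_pow, ← hmean]
  refine ⟨pow_integral_le_integral_pow hS hSb k,
    (integral_pow_le_pow_integral_add hS hSb k).trans_eq ?_⟩
  have hm' : (m : ℝ) ≠ 0 := by positivity
  have hr' : (r : ℝ) ≠ 0 := by positivity
  have hq : (r : ℝ) + 1 ≠ 0 := by positivity
  have hD := sq_mul_powSecondDivDiff_mul_self (m / (r + 1 : ℝ)) (r + 1) k
  rw [mul_div_cancel₀ _ hq, div_pow] at hD
  rw [hmean, hvar, zpow_sub_one₀ hm', zpow_natCast]
  field_simp at hD ⊢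
  linear_combination hD
end

section
/- Let r, m be positive integers. Then the m-fold convolution g_r^{*m} of g_r with itself satisfies g_r^{*m}(x) ≤ ((r!)^m/(mr−1)!) · (m−x)^{mr−1} for all x ∈ [0,m]. -/
/-!
The bound follows from a stronger invariant: `g_r^{*m}` is nonnegative, vanishes on `(m, ∞)` and
is at most `C_m (m - y)^(mr - 1)` for `y ≤ m`. If `F` and `G` satisfy such bounds with data
`(a, C, p)` and `(b, D, q)`, the integrand of `(F * G)(x)` is at most
`C D (t - (x - a))^p (b - t)^q` on `[x - a, b]` and zero elsewhere, and the Beta integral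
`∫ t in c..d, (t - c)^p (d - t)^q = (d - c)^(p + q + 1) p! q! / (p + q + 1)!` yields the
invariant for `F * G` with data `(a + b, C D p! q! / (p + q + 1)!, p + q + 1)`. Starting from
`g_r`, with data `(1, r, r - 1)`, the constants telescope to `C_m = (r!)^m / (mr - 1)!`.
-/

/-- density of the Beta(1,r) distribution: `r (1-x)^(r-1)` on `[0,1]`, `0` elsewhere. -/
noncomputable def gdens (r : ℕ) : ℝ → ℝ :=
  fun x => if x ∈ Set.Icc (0 : ℝ) 1 then (r : ℝ) * (1 - x) ^ (r - 1) else 0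

open MeasureTheory in
/-- `iterConv f m` is the `m`-fold convolution `f^{*m}`: `f^{*1} = f` and
`f^{*(m+1)}(x) = ∫ t, f^{*m}(x - t) * f t` (junk value `0` at `m = 0`). -/
noncomputable def iterConv (f : ℝ → ℝ) : ℕ → ℝ → ℝ
  | 0 => fun _ => 0
  | 1 => f
  | (n+2) => fun x => ∫ t : ℝ, iterConv f (n+1) (x - t) * f t

open MeasureTheory Set Nat

theorem integral_pow_mul_one_sub_pow (a b : ℕ) :
    ∫ x in (0 : ℝ)..1, x ^ a * (1 - x) ^ b = a ! * b ! / (a + b + 1)! := by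
  have h := Complex.betaIntegral_eq_Gamma_mul_div (a + 1) (b + 1) (by simp; positivity)
    (by simp; positivity)
  rw [show (a + 1 + (b + 1) : ℂ) = ((a + b + 1 : ℕ) : ℂ) + 1 by push_cast; ring,
    Complex.Gamma_nat_eq_factorial, Complex.Gamma_nat_eq_factorial,
    Complex.Gamma_nat_eq_factorial] at h
  simp only [Complex.betaIntegral, add_sub_cancel_right, Complex.cpow_natCast] at h
  rw [← Complex.ofReal_inj]
  push_cast
  rw [← h, ← intervalIntegral.integral_ofReal]
  push_cast
  rfl

theorem integral_sub_pow_mul_sub_pow (c d : ℝ) (a b : ℕ) :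
    ∫ t in c..d, (t - c) ^ a * (d - t) ^ b =
      (d - c) ^ (a + b + 1) * (a ! * b ! / (a + b + 1)!) := by
  rcases eq_or_ne c d with rfl | hcd
  · simp
  have hdc : d - c ≠ 0 := sub_ne_zero.2 hcd.symm
  have key := intervalIntegral.integral_comp_add_mul (fun t => (t - c) ^ a * (d - t) ^ b)
    hdc c (a := 0) (b := 1)
  simp only [mul_zero, add_zero, mul_one, add_sub_cancel, smul_eq_mul] at key
  rw [eq_inv_mul_iff_mul_eq₀ hdc] at key
  rw [← key, ← integral_pow_mul_one_sub_pow, ← intervalIntegral.integral_const_mul,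
    ← intervalIntegral.integral_const_mul]
  refine intervalIntegral.integral_congr fun s _ => ?_
  rw [show c + (d - c) * s - c = (d - c) * s by ring,
    show d - (c + (d - c) * s) = (d - c) * (1 - s) by ring, mul_pow, mul_pow]
  ring

structure DominatedByPow (F : ℝ → ℝ) (a C : ℝ) (p : ℕ) : Prop where
  nonneg : ∀ y, 0 ≤ F y
  le_of_le : ∀ y ≤ a, F y ≤ C * (a - y) ^ p
  eq_zero_of_lt : ∀ y, a < y → F y = 0

namespace DominatedByPow

variable {F G : ℝ → ℝ} {a b C D : ℝ} {p q : ℕ}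

theorem mul_comp_sub_le_indicator (hF : DominatedByPow F a C p) (hG : DominatedByPow G b D q)
    (x t : ℝ) :
    F (x - t) * G t ≤
      (Icc (x - a) b).indicator (fun t => C * D * ((t - (x - a)) ^ p * (b - t) ^ q)) t := by
  by_cases ht : t ∈ Icc (x - a) b
  · rw [indicator_of_mem ht]
    have hFt := hF.le_of_le (x - t) (by linarith [ht.1])
    calc F (x - t) * G t ≤ C * (a - (x - t)) ^ p * (D * (b - t) ^ q) :=
          mul_le_mul hFt (hG.le_of_le t ht.2) (hG.nonneg t) ((hF.nonneg _).trans hFt)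
      _ = _ := by ring
  · rw [indicator_of_notMem ht]
    rcases not_and_or.1 ht with ht | ht
    · rw [hF.eq_zero_of_lt (x - t) (by linarith [not_le.1 ht]), zero_mul]
    · rw [hG.eq_zero_of_lt t (not_le.1 ht), mul_zero]

theorem convolution (hF : DominatedByPow F a C p) (hG : DominatedByPow G b D q) :
    DominatedByPow (fun x => ∫ t, F (x - t) * G t) (a + b)
      (C * D * (p ! * q ! / (p + q + 1)!)) (p + q + 1) where
  nonneg x := integral_nonneg fun t => mul_nonneg (hF.nonneg _) (hG.nonneg _)
  le_of_le x hx := by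
    have hint : Integrable
        ((Icc (x - a) b).indicator (fun t => C * D * ((t - (x - a)) ^ p * (b - t) ^ q))) :=
      (Continuous.integrableOn_Icc (by fun_prop)).integrable_indicator measurableSet_Icc
    calc ∫ t, F (x - t) * G t
        ≤ ∫ t, (Icc (x - a) b).indicator
            (fun t => C * D * ((t - (x - a)) ^ p * (b - t) ^ q)) t :=
          integral_mono_of_nonneg (ae_of_all _ fun t => mul_nonneg (hF.nonneg _) (hG.nonneg _))
            hint (ae_of_all _ (hF.mul_comp_sub_le_indicator hG x))
      _ = C * D * (p ! * q ! / (p + q + 1)!) * (a + b - x) ^ (p + q + 1) := by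
        rw [integral_indicator measurableSet_Icc, integral_Icc_eq_integral_Ioc,
          ← intervalIntegral.integral_of_le (by linarith), intervalIntegral.integral_const_mul,
          integral_sub_pow_mul_sub_pow]
        ring_nf
  eq_zero_of_lt x hx := by
    have hzero (t : ℝ) : F (x - t) * G t = 0 := by
      rcases le_or_gt t b with ht | ht
      · rw [hF.eq_zero_of_lt (x - t) (by linarith), zero_mul]
      · rw [hG.eq_zero_of_lt t ht, mul_zero]
    simp only [hzero, integral_zero]

end DominatedByPow

theorem dominatedByPow_gdens (r : ℕ) : DominatedByPow (gdens r) 1 r (r - 1) where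
  nonneg x := by
    unfold gdens
    split_ifs with hx
    · exact mul_nonneg r.cast_nonneg (pow_nonneg (by linarith [hx.2]) _)
    · rfl
  le_of_le x hx := by
    unfold gdens
    split_ifs
    · rfl
    · exact mul_nonneg r.cast_nonneg (pow_nonneg (by linarith) _)
  eq_zero_of_lt x hx := if_neg fun h => hx.not_ge h.2

theorem iterConv_succ (f : ℝ → ℝ) {m : ℕ} (hm : m ≠ 0) :
    iterConv f (m + 1) = fun x => ∫ t, iterConv f m (x - t) * f t := by
  obtain ⟨k, rfl⟩ := exists_eq_succ_of_ne_zero hm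
  rfl

theorem dominatedByPow_iterConv_gdens {r : ℕ} (hr : 0 < r) {m : ℕ} (hm : 0 < m) :
    DominatedByPow (iterConv (gdens r) m) m ((r ! : ℝ) ^ m / (m * r - 1)!) (m * r - 1) := by
  have hfac : (r ! : ℝ) = r * (r - 1)! := by exact_mod_cast (mul_factorial_pred hr.ne').symm
  induction m, hm using Nat.le_induction with
  | base =>
    simp only [succ_eq_add_one, zero_add, cast_one, pow_one, one_mul]
    convert dominatedByPow_gdens r using 2
    · rfl
    · rw [hfac]
      field_simp
  | succ m hm ih =>
    have hexp : m * r - 1 + (r - 1) + 1 = (m + 1) * r - 1 := by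
      have : 1 ≤ m * r := one_le_iff_ne_zero.2 (by positivity)
      rw [Nat.add_one_mul]
      omega
    rw [iterConv_succ _ (one_le_iff_ne_zero.1 hm)]
    convert ih.convolution (dominatedByPow_gdens r) using 2
    · push_cast; rfl
    · rw [hexp, pow_succ, hfac]
      field_simp
    · exact hexp.symm

theorem stmt_6 (r m : ℕ) (hr : 0 < r) (hm : 0 < m) :
    ∀ x ∈ Set.Icc (0 : ℝ) (m : ℝ),
      iterConv (gdens r) m x ≤
        (r.factorial : ℝ) ^ m / ((m * r - 1).factorial : ℝ) * ((m : ℝ) - x) ^ (m * r - 1) :=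
  fun x hx => (dominatedByPow_iterConv_gdens hr hm).le_of_le x hx.2
end

section
/- Let r, m be positive integers and k a natural number. Then M_r(k,m) ≥ (k!·(r!)^m·m^{k+mr}/(k+mr)!) · (1 − ((m−1)^k/m^{k+mr}) · Σ_{i=1}^{mr} C(k+mr, k+i)·(m−1)^i), where C(·,·) denotes the binomial coefficient. -/
open MeasureTheory Set Finset

open scoped Nat

noncomputable def truncPow (s : ℝ) (k : ℕ) (t : ℝ) : ℝ :=
  if t ≤ s then (s - t) ^ k else 0

theorem truncPow_nonneg (s : ℝ) (k : ℕ) (t : ℝ) : 0 ≤ truncPow s k t := by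
  unfold truncPow
  split_ifs with h
  · exact pow_nonneg (sub_nonneg.2 h) k
  · exact le_rfl

theorem truncPow_le_one {s t : ℝ} (k : ℕ) (h : s - t ≤ 1) : truncPow s k t ≤ 1 := by
  unfold truncPow
  split_ifs with hts
  · exact pow_le_one₀ (sub_nonneg.2 hts) h
  · exact zero_le_one

theorem truncPow_add (s : ℝ) (k : ℕ) (x t : ℝ) :
    truncPow s k (x + t) = truncPow (s - x) k t := by
  simp only [truncPow, le_sub_iff_add_le', sub_sub]

theorem measurable_truncPow (s : ℝ) (k : ℕ) : Measurable (truncPow s k) :=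
  Measurable.ite measurableSet_Iic (by fun_prop) measurable_const

theorem integral_pow_mul_sub_pow (s : ℝ) (a b : ℕ) :
    ∫ y in (0 : ℝ)..s, y ^ a * (s - y) ^ b = a ! * b ! / (a + b + 1)! * s ^ (a + b + 1) := by
  induction b generalizing a with
  | zero =>
    simp only [pow_zero, mul_one, integral_pow, zero_pow a.succ_ne_zero, sub_zero, add_zero,
      Nat.factorial_zero, Nat.factorial_succ]
    push_cast
    field_simp
  | succ b ih =>
    have hsplit : ∀ y : ℝ, y ^ a * (s - y) ^ (b + 1)
        = s * (y ^ a * (s - y) ^ b) - y ^ (a + 1) * (s - y) ^ b := fun y => by ring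
    simp_rw [hsplit]
    rw [intervalIntegral.integral_sub (by apply Continuous.intervalIntegrable; fun_prop)
      (by apply Continuous.intervalIntegrable; fun_prop), intervalIntegral.integral_const_mul,
      ih, ih]
    rw [show a + 1 + b + 1 = a + b + 1 + 1 by ring, show a + (b + 1) + 1 = a + b + 1 + 1 by ring,
      Nat.factorial_succ (a + b + 1), Nat.factorial_succ a, Nat.factorial_succ b]
    push_cast
    field_simp
    ring

theorem setIntegral_Icc_pow_mul_truncPow {s : ℝ} (hs : s ≤ 1) (a b : ℕ) :
    ∫ x in Icc (0 : ℝ) 1, x ^ a * truncPow s b x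
      = a ! * b ! / (a + b + 1)! * truncPow s (a + b + 1) 0 := by
  rcases lt_or_ge s 0 with hs0 | hs0
  · have hzero : EqOn (fun x => x ^ a * truncPow s b x) 0 (Icc 0 1) := fun x hx => by
      simp [truncPow, hs0.trans_le hx.1]
    rw [setIntegral_congr_fun measurableSet_Icc hzero]
    simp [truncPow, hs0.not_ge]
  · have hind : EqOn (fun x => x ^ a * truncPow s b x)
        ((Iic s).indicator fun x => x ^ a * (s - x) ^ b) (Icc 0 1) := fun x _ => by
      by_cases hx : x ≤ s <;> simp [truncPow, hx]
    rw [setIntegral_congr_fun measurableSet_Icc hind, integral_Icc_eq_integral_Ioc,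
      setIntegral_indicator measurableSet_Iic, Ioc_inter_Iic, inf_eq_right.2 hs,
      ← intervalIntegral.integral_of_le hs0, integral_pow_mul_sub_pow]
    simp [truncPow, hs0]

theorem setIntegral_Icc_fin_succ {E : Type*} [NormedAddCommGroup E] [NormedSpace ℝ E]
    {n : ℕ} {f : (Fin (n + 1) → ℝ) → E} {a b : Fin (n + 1) → ℝ}
    (hf : IntegrableOn f (Icc a b)) :
    ∫ x in Icc a b, f x
      = ∫ t in Icc (a 0) (b 0), ∫ y in Icc (Fin.tail a) (Fin.tail b), f (Fin.cons t y) := by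
  set e : ℝ × (Fin n → ℝ) ≃ᵐ (Fin (n + 1) → ℝ) :=
    (MeasurableEquiv.piFinSuccAbove (fun _ => ℝ) 0).symm
  have he : MeasurePreserving e :=
    (volume_preserving_piFinSuccAbove (fun _ : Fin (n + 1) => ℝ) 0).symm _
  have hpre : e ⁻¹' Icc a b = Icc (a 0) (b 0) ×ˢ Icc (Fin.tail a) (Fin.tail b) :=
    ((Fin.insertNthOrderIso (fun _ => ℝ) 0).preimage_Icc _ _).trans (Icc_prod_eq _ _)
  rw [← he.map_eq, setIntegral_map_equiv, hpre, Measure.volume_eq_prod, setIntegral_prod]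
  · simp [e, MeasurableEquiv.piFinSuccAbove_symm_apply, Fin.insertNthEquiv, Fin.insertNth_zero']
  · rwa [← he.integrableOn_comp_preimage e.measurableEmbedding, hpre] at hf

theorem integrableOn_truncPow_sum_mul_prod_pow {m : ℕ} {s : ℝ} (hs : s ≤ 1) (k a : ℕ) :
    IntegrableOn (fun y : Fin m → ℝ => truncPow s k (∑ i, y i) * ∏ i, y i ^ a) (Icc 0 1) := by
  refine Measure.integrableOn_of_bounded (M := 1) isCompact_Icc.measure_lt_top.ne
    (((measurable_truncPow s k).comp (by fun_prop)).mul (by fun_prop)).aestronglyMeasurable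
    ?_
  rw [ae_restrict_iff' measurableSet_Icc]
  refine .of_forall fun y ⟨hy0, hy1⟩ => ?_
  have hsum : 0 ≤ ∑ i, y i := sum_nonneg fun i _ => hy0 i
  have hprod : 0 ≤ ∏ i, y i ^ a := prod_nonneg fun i _ => pow_nonneg (hy0 i) a
  rw [norm_mul, Real.norm_of_nonneg (truncPow_nonneg ..), Real.norm_of_nonneg hprod]
  exact mul_le_one₀ (truncPow_le_one k (by linarith)) hprod
    (prod_le_one (fun i _ => pow_nonneg (hy0 i) a) fun i _ => pow_le_one₀ (hy0 i) (hy1 i))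

-- Stated with `truncPow s _ 0` rather than `s ^ _`, the formula also holds for `s < 0`; the
-- induction step needs it at `s - t` for every `t ∈ [0, 1]`.
theorem setIntegral_Icc_truncPow_sum_mul_prod_pow (a : ℕ) :
    ∀ (m k : ℕ) {s : ℝ}, s ≤ 1 →
      ∫ y in Icc (0 : Fin m → ℝ) 1, truncPow s k (∑ i, y i) * ∏ i, y i ^ a
        = k ! * a ! ^ m / (k + m * (a + 1))! * truncPow s (k + m * (a + 1)) 0
  | 0, k, s, _ => by
    rw [show Icc (0 : Fin 0 → ℝ) 1 = univ from
      eq_univ_of_forall fun y => ⟨fun i => i.elim0, fun i => i.elim0⟩, volume_pi,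
      Measure.pi_of_empty]
    simp [div_self (Nat.cast_ne_zero.2 k.factorial_ne_zero : (k ! : ℝ) ≠ 0)]
  | m + 1, k, s, hs => by
    set N := k + m * (a + 1)
    have hinner : ∀ t ∈ Icc (0 : ℝ) 1,
        ∫ y in Icc (0 : Fin m → ℝ) 1, truncPow s k (∑ i, (Fin.cons t y : Fin (m + 1) → ℝ) i)
            * ∏ i, (Fin.cons t y : Fin (m + 1) → ℝ) i ^ a
          = k ! * a ! ^ m / N ! * (t ^ a * truncPow s N t) := fun t ht => by
      simp only [Fin.sum_cons, Fin.prod_univ_succ, Fin.cons_zero, Fin.cons_succ, truncPow_add,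
        mul_left_comm _ (t ^ a)]
      rw [integral_const_mul,
        setIntegral_Icc_truncPow_sum_mul_prod_pow a m k (by linarith [ht.1]), ← truncPow_add,
        add_zero]
    rw [setIntegral_Icc_fin_succ (integrableOn_truncPow_sum_mul_prod_pow hs k a)]
    change ∫ t in Icc (0 : ℝ) 1, ∫ y in Icc (0 : Fin m → ℝ) 1, _ = _
    rw [setIntegral_congr_fun measurableSet_Icc hinner, integral_const_mul,
      setIntegral_Icc_pow_mul_truncPow hs, show a + N + 1 = k + (m + 1) * (a + 1) by ring]
    field_simp
    ring

theorem setIntegral_Icc_comp_one_sub {ι E : Type*} [Fintype ι] [NormedAddCommGroup E]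
    [NormedSpace ℝ E] (f : (ι → ℝ) → E) :
    ∫ y in Icc (0 : ι → ℝ) 1, f (1 - y) = ∫ y in Icc (0 : ι → ℝ) 1, f y := by
  have h := (Measure.measurePreserving_sub_left volume (1 : ι → ℝ)).setIntegral_preimage_emb
    (MeasurableEquiv.subLeft (1 : ι → ℝ)).measurableEmbedding f (Icc 0 1)
  rwa [preimage_const_sub_Icc, sub_zero, sub_self] at h

theorem momentM_eq_setIntegral_Icc (r m k : ℕ) :
    momentM r m k
      = ∫ y in Icc (0 : Fin m → ℝ) 1,
          ((m : ℝ) - ∑ i, y i) ^ k * (r ^ m * ∏ i, y i ^ (r - 1)) := by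
  rw [momentM, ← setIntegral_Icc_comp_one_sub]
  refine integral_congr_ae (.of_forall fun y => ?_)
  simp [sum_sub_distrib, prod_mul_distrib]

theorem sum_choose_mul_pow_mul_truncPow_le {c t : ℝ} (ht : t ≤ 1 + c) (k : ℕ) :
    ∑ j ∈ range (k + 1), (k.choose j : ℝ) * c ^ (k - j) * truncPow 1 j t ≤ (1 + c - t) ^ k := by
  by_cases h : t ≤ 1
  · rw [show 1 + c - t = (1 - t) + c by ring, add_pow]
    refine le_of_eq (sum_congr rfl fun j _ => ?_)
    rw [truncPow, if_pos h]
    ring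
  · simp only [truncPow, if_neg h, mul_zero, sum_const_zero]
    exact pow_nonneg (by linarith) k

theorem factorial_pow_mul_sum_le_momentM {r m : ℕ} (hr : 0 < r) (k : ℕ) :
    (r ! : ℝ) ^ m * ∑ j ∈ range (k + 1),
        (k.choose j : ℝ) * ((m : ℝ) - 1) ^ (k - j) * (j ! / (j + m * r)!) ≤ momentM r m k := by
  set w : (Fin m → ℝ) → ℝ := fun y => r ^ m * ∏ i, y i ^ (r - 1)
  have hterm : ∀ j,
      ∫ y in Icc 0 1, truncPow 1 j (∑ i, y i) * w y = r ! ^ m * (j ! / (j + m * r)!) := by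
    intro j
    simp_rw [w, mul_left_comm _ ((r : ℝ) ^ m)]
    rw [integral_const_mul, setIntegral_Icc_truncPow_sum_mul_prod_pow (r - 1) m j le_rfl,
      Nat.sub_add_cancel hr, ← Nat.mul_factorial_pred hr.ne']
    simp only [truncPow, zero_le_one, if_true, sub_zero, one_pow, mul_one]
    push_cast
    ring
  have hint : ∀ j,
      IntegrableOn (fun y => truncPow 1 j (∑ i, y i) * w y) (Icc (0 : Fin m → ℝ) 1) := by
    intro j
    simp_rw [w, mul_left_comm _ ((r : ℝ) ^ m)]
    exact (integrableOn_truncPow_sum_mul_prod_pow le_rfl j (r - 1)).const_mul _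
  calc _ = ∑ j ∈ range (k + 1), (k.choose j : ℝ) * ((m : ℝ) - 1) ^ (k - j)
        * ∫ y in Icc 0 1, truncPow 1 j (∑ i, y i) * w y := by
        simp_rw [hterm, mul_sum]
        ring_nf
    _ = ∫ y in Icc 0 1, ∑ j ∈ range (k + 1),
          (k.choose j : ℝ) * ((m : ℝ) - 1) ^ (k - j) * (truncPow 1 j (∑ i, y i) * w y) := by
        rw [integral_finsetSum _ fun j _ => (hint j).const_mul _]
        simp_rw [integral_const_mul]
    _ ≤ ∫ y in Icc 0 1, ((m : ℝ) - ∑ i, y i) ^ k * w y := by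
        refine setIntegral_mono_on (integrable_finsetSum _ fun j _ => (hint j).const_mul _)
          (ContinuousOn.integrableOn_compact isCompact_Icc (by fun_prop)) measurableSet_Icc
          fun y ⟨hy0, hy1⟩ => ?_
        have hsum : ∑ i, y i ≤ 1 + ((m : ℝ) - 1) := by
          simpa using sum_le_sum fun i (_ : i ∈ Finset.univ) => hy1 i
        simp only [← mul_assoc, ← sum_mul]
        refine mul_le_mul_of_nonneg_right ?_
          (mul_nonneg (by positivity) (prod_nonneg fun i _ => pow_nonneg (hy0 i) _))
        simpa using sum_choose_mul_pow_mul_truncPow_le hsum k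
    _ = momentM r m k := (momentM_eq_setIntegral_Icc r m k).symm

theorem add_one_pow_add_eq {R : Type*} [CommRing R] (x : R) (k p : ℕ) :
    (x + 1) ^ (k + p) = ∑ l ∈ range (k + 1), ((k + p).choose l : R) * x ^ l
      + x ^ k * ∑ i ∈ Icc 1 p, ((k + p).choose (k + i) : R) * x ^ i := by
  rw [add_pow, show k + p + 1 = (k + 1) + p by ring, sum_range_add,
    ← Finset.Ico_add_one_right_eq_Icc, sum_Ico_eq_sum_range, Nat.add_sub_cancel, mul_sum]
  congr 1
  · exact sum_congr rfl fun l _ => by ring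
  · refine sum_congr rfl fun i _ => ?_
    rw [show k + 1 + i = k + (1 + i) by ring]
    ring

theorem sum_choose_mul_pow_mul_factorial_div {K : Type*} [Field K] [CharZero K] (x : K)
    (k p : ℕ) :
    ∑ j ∈ range (k + 1), (k.choose j : K) * x ^ (k - j) * (j ! / (j + p)!)
      = k ! / (k + p)! * ∑ l ∈ range (k + 1), ((k + p).choose l : K) * x ^ l := by
  rw [mul_sum, ← sum_range_reflect]
  refine sum_congr rfl fun j hj => ?_
  have hjk : j ≤ k := Nat.lt_succ_iff.1 (mem_range.1 hj)
  rw [Nat.add_sub_cancel, Nat.choose_symm hjk, Nat.sub_sub_self hjk, Nat.cast_choose K hjk,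
    Nat.cast_choose K (by omega : j ≤ k + p), show k + p - j = k - j + p by omega]
  have := (k - j).factorial_ne_zero
  have := (k + p).factorial_ne_zero
  field_simp

theorem stmt_10 (r m : ℕ) (hr : 0 < r) (hm : 0 < m) (k : ℕ) :
    momentM r m k ≥
      (k.factorial : ℝ) * (r.factorial : ℝ) ^ m * (m : ℝ) ^ (k + m * r) /
          ((k + m * r).factorial : ℝ) *
        (1 -
          ((m : ℝ) - 1) ^ k / (m : ℝ) ^ (k + m * r) *
            ∑ i ∈ Finset.Icc 1 (m * r),
              ((k + m * r).choose (k + i) : ℝ) * ((m : ℝ) - 1) ^ i) := by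
  have hmn : (m : ℝ) ^ (k + m * r) ≠ 0 := pow_ne_zero _ (Nat.cast_ne_zero.2 hm.ne')
  have hsplit := add_one_pow_add_eq ((m : ℝ) - 1) k (m * r)
  rw [sub_add_cancel] at hsplit
  have hfactor : 1 - ((m : ℝ) - 1) ^ k / (m : ℝ) ^ (k + m * r) *
      ∑ i ∈ Icc 1 (m * r), ((k + m * r).choose (k + i) : ℝ) * ((m : ℝ) - 1) ^ i
      = (∑ l ∈ range (k + 1), ((k + m * r).choose l : ℝ) * ((m : ℝ) - 1) ^ l)
        / (m : ℝ) ^ (k + m * r) := by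
    field_simp
    linear_combination hsplit
  rw [ge_iff_le, hfactor]
  calc _ = (r ! : ℝ) ^ m * (k ! / (k + m * r)!
        * ∑ l ∈ range (k + 1), ((k + m * r).choose l : ℝ) * ((m : ℝ) - 1) ^ l) := by
        field_simp
    _ ≤ momentM r m k := by
      rw [← sum_choose_mul_pow_mul_factorial_div]
      exact factorial_pow_mul_sum_le_momentM hr k
end

section
/- Let k be a natural number, m a positive integer, and r an integer with r ≥ 2. Then r^k · M_r(k,m) ≤ (r/(r−1))^{2k} · (m−1+k)!/(m−1)!. -/
open MeasureTheory Finset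
open scoped Nat

lemma setIntegral_Icc_prod_eq_prod {ι 𝕜 : Type*} [Fintype ι] [RCLike 𝕜] (a b : ι → ℝ)
    (f : ι → ℝ → 𝕜) :
    ∫ x in Set.Icc a b, ∏ i, f i (x i) = ∏ i, ∫ t in Set.Icc (a i) (b i), f i t := by
  rw [← Set.pi_univ_Icc, volume_pi, Measure.restrict_pi_pi, integral_fintype_prod_eq_prod]

lemma card_piAntidiag_univ {ι : Type*} [Fintype ι] [DecidableEq ι] (k : ℕ) :
    #(piAntidiag (univ : Finset ι) k) = (Fintype.card ι).multichoose k := by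
  rw [← map_sym_eq_piAntidiag, card_map, sym_univ, card_univ, Sym.card_sym_eq_multichoose]

lemma factorial_mul_factorial_mul_multichoose {m : ℕ} (hm : 0 < m) (k : ℕ) :
    (m - 1)! * (k ! * m.multichoose k) = (m - 1 + k)! := by
  rw [Nat.multichoose_eq, ← Nat.ascFactorial_eq_factorial_mul_choose',
    Nat.factorial_mul_ascFactorial' _ _ hm, Nat.sub_add_comm hm]

noncomputable def betaOneMoment (r j : ℕ) : ℝ :=
  ∫ x in Set.Icc (0 : ℝ) 1, x ^ j * (r * (1 - x) ^ (r - 1))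

lemma betaOneMoment_eq_intervalIntegral (r j : ℕ) :
    betaOneMoment r j = ∫ x in (0 : ℝ)..1, x ^ j * (r * (1 - x) ^ (r - 1)) := by
  rw [betaOneMoment, integral_Icc_eq_integral_Ioc, intervalIntegral.integral_of_le zero_le_one]

lemma betaOneMoment_nonneg (r j : ℕ) : 0 ≤ betaOneMoment r j :=
  setIntegral_nonneg measurableSet_Icc fun x ⟨hx₀, hx₁⟩ ↦ by
    have : 0 ≤ 1 - x := sub_nonneg.2 hx₁
    positivity

lemma hasDerivAt_neg_one_sub_pow (r : ℕ) (x : ℝ) :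
    HasDerivAt (fun y : ℝ ↦ -(1 - y) ^ r) (r * (1 - x) ^ (r - 1)) x := by
  refine ((hasDerivAt_pow r (1 - x)).comp x ((hasDerivAt_id x).const_sub 1)).neg.congr_deriv ?_
  ring

lemma betaOneMoment_zero {r : ℕ} (hr : 0 < r) : betaOneMoment r 0 = 1 := by
  rw [betaOneMoment_eq_intervalIntegral]
  simp only [pow_zero, one_mul]
  rw [intervalIntegral.integral_eq_sub_of_hasDerivAt (fun x _ ↦ hasDerivAt_neg_one_sub_pow r x)
    (by apply Continuous.intervalIntegrable; fun_prop)]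
  simp [hr.ne']

lemma betaOneMoment_succ {r : ℕ} (hr : 0 < r) (j : ℕ) :
    betaOneMoment r (j + 1) = (j + 1) * ∫ x in (0 : ℝ)..1, x ^ j * (1 - x) ^ r := by
  rw [betaOneMoment_eq_intervalIntegral, intervalIntegral.integral_mul_deriv_eq_deriv_mul
    (fun x _ ↦ hasDerivAt_pow (j + 1) x) (fun x _ ↦ hasDerivAt_neg_one_sub_pow r x)
    (by apply Continuous.intervalIntegrable; fun_prop)
    (by apply Continuous.intervalIntegrable; fun_prop)]
  simp only [sub_self, zero_pow hr.ne', zero_pow j.succ_ne_zero, neg_zero, mul_zero, zero_mul,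
    sub_zero, zero_sub, add_tsub_cancel_right, mul_neg, intervalIntegral.integral_neg, neg_neg,
    mul_assoc, intervalIntegral.integral_const_mul]
  push_cast
  rfl

lemma mul_betaOneMoment_succ_le {r : ℕ} (hr : 0 < r) (j : ℕ) :
    r * betaOneMoment r (j + 1) ≤ (j + 1) * betaOneMoment r j := by
  rw [betaOneMoment_succ hr, betaOneMoment_eq_intervalIntegral, mul_left_comm,
    ← intervalIntegral.integral_const_mul]
  gcongr
  refine intervalIntegral.integral_mono_on zero_le_one
    (by apply Continuous.intervalIntegrable; fun_prop)
    (by apply Continuous.intervalIntegrable; fun_prop) fun x ⟨hx₀, hx₁⟩ ↦ ?_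
  have hpow : (1 - x) ^ r ≤ (1 - x) ^ (r - 1) :=
    pow_le_pow_of_le_one (sub_nonneg.2 hx₁) (by linarith) (Nat.sub_le r 1)
  calc r * (x ^ j * (1 - x) ^ r) = x ^ j * (r * (1 - x) ^ r) := by ring
    _ ≤ x ^ j * (r * (1 - x) ^ (r - 1)) := by gcongr

lemma pow_mul_betaOneMoment_le_factorial {r : ℕ} (hr : 0 < r) (j : ℕ) :
    r ^ j * betaOneMoment r j ≤ j ! := by
  induction j with
  | zero => simp [betaOneMoment_zero hr]
  | succ j ih =>
    calc (r : ℝ) ^ (j + 1) * betaOneMoment r (j + 1)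
        = r ^ j * (r * betaOneMoment r (j + 1)) := by ring
      _ ≤ r ^ j * ((j + 1) * betaOneMoment r j) := by
          gcongr r ^ j * ?_; exact mul_betaOneMoment_succ_le hr j
      _ = (j + 1) * (r ^ j * betaOneMoment r j) := by ring
      _ ≤ (j + 1) * j ! := by gcongr
      _ = (j + 1)! := by push_cast [Nat.factorial_succ]; ring

lemma momentM_eq_sum_piAntidiag (r m k : ℕ) :
    momentM r m k = ∑ d ∈ piAntidiag (univ : Finset (Fin m)) k,
      (Nat.multinomial univ d : ℝ) * ∏ i, betaOneMoment r (d i) := by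
  have hexpand (x : Fin m → ℝ) : (∑ i, x i) ^ k * ∏ i, (r : ℝ) * (1 - x i) ^ (r - 1) =
      ∑ d ∈ piAntidiag univ k,
        (Nat.multinomial univ d : ℝ) * ∏ i, x i ^ d i * (r * (1 - x i) ^ (r - 1)) := by
    simp only [sum_pow_eq_sum_piAntidiag, sum_mul, mul_assoc, prod_mul_distrib]
  simp_rw [momentM, hexpand]
  rw [integral_finsetSum _ fun d _ ↦ Continuous.integrableOn_Icc (by fun_prop)]
  refine sum_congr rfl fun d _ ↦ ?_
  rw [integral_const_mul, setIntegral_Icc_prod_eq_prod _ _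
    fun i t ↦ t ^ d i * (r * (1 - t) ^ (r - 1))]
  rfl

lemma pow_mul_momentM_le {r : ℕ} (hr : 0 < r) (m k : ℕ) :
    r ^ k * momentM r m k ≤ k ! * m.multichoose k := by
  rw [momentM_eq_sum_piAntidiag, mul_sum]
  calc _ ≤ ∑ d ∈ piAntidiag (univ : Finset (Fin m)) k, (k ! : ℝ) := sum_le_sum fun d hd ↦ ?_
    _ = k ! * m.multichoose k := by
      rw [sum_const, card_piAntidiag_univ, Fintype.card_fin, nsmul_eq_mul, mul_comm]
  obtain ⟨hsum, -⟩ := mem_piAntidiag.1 hd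
  calc (r : ℝ) ^ k * ((Nat.multinomial univ d : ℝ) * ∏ i, betaOneMoment r (d i))
      = Nat.multinomial univ d * ∏ i, r ^ d i * betaOneMoment r (d i) := by
        rw [prod_mul_distrib, prod_pow_eq_pow_sum, hsum]; ring
    _ ≤ Nat.multinomial univ d * ∏ i, ((d i)! : ℝ) := by
        gcongr with i
        · exact fun i _ ↦ mul_nonneg (by positivity) (betaOneMoment_nonneg r (d i))
        · exact pow_mul_betaOneMoment_le_factorial hr (d i)
    _ = k ! := by
        rw [← hsum]; exact_mod_cast (mul_comm _ _).trans (Nat.multinomial_spec univ d)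

theorem stmt_14 (k : ℕ) (m : ℕ) (hm : 0 < m) (r : ℕ) (hr : 2 ≤ r) :
    (r : ℝ) ^ k * momentM r m k ≤
      ((r : ℝ) / ((r : ℝ) - 1)) ^ (2 * k) *
        ((m - 1 + k).factorial : ℝ) / ((m - 1).factorial : ℝ) := by
  have hr' : (2 : ℝ) ≤ r := by exact_mod_cast hr
  have hratio : 1 ≤ ((r : ℝ) / ((r : ℝ) - 1)) ^ (2 * k) :=
    one_le_pow₀ ((one_le_div (by linarith)).2 (by linarith))
  rw [le_div_iff₀ (by positivity)]
  calc (r : ℝ) ^ k * momentM r m k * (m - 1)! ≤ k ! * m.multichoose k * (m - 1)! := by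
        gcongr ?_ * _
        exact pow_mul_momentM_le (by omega) m k
    _ = (m - 1 + k)! := by
        rw [mul_comm]; exact_mod_cast factorial_mul_factorial_mul_multichoose hm k
    _ ≤ _ := le_mul_of_one_le_left (by positivity) hratio
end

section
/- Let m, r be positive integers and p a natural number with p ≥ r·m. Then S_r(p,m) ≥ m^p/m! − ((m−1)^{p−rm}/m!) · Σ_{i=1}^{mr} C(p, p−rm+i)·(m−1)^i, where C(·,·) denotes the binomial coefficient. -/
/-!
Call a map `Fin p → Fin m` large if all its fibres have at least `r` elements. For `r > 0` its
fibres form a partition counted by `S_r(p, m)`, labelled by `Fin m`, so there are at most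
`S_r(p, m) * m!` large maps. On the other hand, by induction on `m`, choosing the last fibre first, the
number of large maps dominates the tail `∑_{s ≥ r m} C(p, s) (m - 1)^(p - s)` of the binomial
expansion of `m^p = ((m - 1) + 1)^p`: after regrouping by trinomial coefficients, the induction
step comes down to `∑_{c ≥ b + r} C(u, c) ≤ ∑_{r ≤ c ≤ u - b} C(u, c)` for `r ≤ b`, a comparison
of two windows of the same length in the `u`-th row of Pascal's triangle. The head of the
expansion is the sum subtracted in the bound.
-/

open Finset

theorem Nat.choose_le_choose_of_le_of_add_le {n a b : ℕ} (hab : a ≤ b) (h : a + b ≤ n) :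
    n.choose a ≤ n.choose b := by
  have below_half : ∀ {b}, a ≤ b → 2 * b ≤ n → n.choose a ≤ n.choose b := by
    intro b hab hb
    induction b, hab using Nat.le_induction with
    | base => exact le_rfl
    | succ k _ ih => exact (ih (by omega)).trans (Nat.choose_le_succ_of_lt_half_left (by omega))
  rcases le_or_gt (2 * b) n with hb | hb
  · exact below_half hab hb
  · rw [← Nat.choose_symm (by omega : b ≤ n)]
    exact below_half (by omega) (by omega)

theorem sum_range_choose_le_sum_range_choose_add {u t L : ℕ} (h : 2 * t + L ≤ u + 2) :
    ∑ j ∈ range L, u.choose j ≤ ∑ j ∈ range L, u.choose (t + j) := by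
  induction t with
  | zero => simp
  | succ t ih =>
    -- shifting the window by one trades `u.choose t` for the larger `u.choose (t + L)`
    have shift : ∑ j ∈ range L, u.choose (t + j) + u.choose (t + L)
        = ∑ j ∈ range L, u.choose (t + 1 + j) + u.choose t := by
      rw [← sum_range_succ (fun j => u.choose (t + j)), sum_range_succ']
      simp only [add_zero, add_assoc, add_comm 1]
    have hle : u.choose t ≤ u.choose (t + L) :=
      Nat.choose_le_choose_of_le_of_add_le (by omega) (by omega)
    have shorter := ih (by omega)
    omega

theorem sum_Icc_choose_le_sum_Icc_choose {u b r : ℕ} (h : r ≤ b) :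
    ∑ c ∈ Icc (b + r) u, u.choose c ≤ ∑ c ∈ Icc r (u - b), u.choose c := by
  rcases lt_or_ge u (b + r) with hu | hu
  · simp [Icc_eq_empty_of_lt hu]
  have lhs :
      ∑ c ∈ Icc (b + r) u, u.choose c = ∑ j ∈ range (u - b - r + 1), u.choose j := by
    refine sum_nbij' (u - ·) (u - ·) ?_ ?_ ?_ ?_ ?_ <;> intro c hc <;>
      simp only [mem_Icc, mem_range] at hc ⊢
    any_goals omega
    exact (Nat.choose_symm hc.2).symm
  have rhs :
      ∑ c ∈ Icc r (u - b), u.choose c = ∑ j ∈ range (u - b - r + 1), u.choose (r + j) := by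
    rw [← Ico_add_one_right_eq_Icc, sum_Ico_eq_sum_range]
    congr 2
    omega
  rw [lhs, rhs]
  exact sum_range_choose_le_sum_range_choose_add (by omega)

def binomialTail (p a x : ℕ) : ℕ := ∑ s ∈ Icc a p, p.choose s * x ^ (p - s)

theorem binomialTail_zero (q x : ℕ) : binomialTail q 0 x = (x + 1) ^ q := by
  rw [binomialTail, add_comm, add_pow, range_eq_Ico, ← Ico_add_one_right_eq_Icc]
  simp only [one_pow, one_mul]
  exact sum_congr rfl fun _ _ => mul_comm _ _

theorem sum_choose_mul_binomialTail (p b x : ℕ) {A : Finset ℕ} (hA : ∀ c ∈ A, c ≤ p) :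
    ∑ c ∈ A, p.choose c * binomialTail (p - c) b x
      = ∑ u ∈ range (p + 1),
          p.choose u * x ^ (p - u) * ∑ c ∈ A with c + b ≤ u, u.choose c := by
  have inner : ∀ c ∈ A, p.choose c * binomialTail (p - c) b x
      = ∑ u ∈ Icc (c + b) p, p.choose u * x ^ (p - u) * u.choose c := by
    intro c hc
    have hcp := hA c hc
    rw [binomialTail, mul_sum]
    refine sum_nbij' (c + ·) (· - c) ?_ ?_ ?_ ?_ ?_ <;> intro s hs <;>
      simp only [mem_Icc] at hs ⊢
    any_goals omega
    have trinomial := Nat.choose_mul (n := p) (k := c + s) (s := c) (by omega)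
    rw [Nat.add_sub_cancel_left] at trinomial
    rw [← mul_assoc, ← trinomial, Nat.sub_sub]
    ring
  rw [sum_congr rfl inner, sum_comm' (t' := range (p + 1))
    (s' := fun u => {c ∈ A | c + b ≤ u})]
  · simp only [mul_sum]
  · intro c u
    simp only [mem_Icc, mem_filter, mem_range]
    constructor
    · rintro ⟨hc, hu⟩
      exact ⟨⟨hc, hu.1⟩, by omega⟩
    · rintro ⟨⟨hc, hu⟩, hup⟩
      exact ⟨hc, hu, by omega⟩

theorem binomialTail_succ_le {p b r x : ℕ} (h : r ≤ b) :
    binomialTail p (b + r) (x + 1) ≤ ∑ c ∈ Icc r p, p.choose c * binomialTail (p - c) b x := by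
  have expand : binomialTail p (b + r) (x + 1)
      = ∑ c ∈ Icc (b + r) p, p.choose c * binomialTail (p - c) 0 x := by
    rw [binomialTail]
    simp only [binomialTail_zero]
  rw [expand, sum_choose_mul_binomialTail _ _ _ (fun c hc => (mem_Icc.1 hc).2),
    sum_choose_mul_binomialTail _ _ _ (fun c hc => (mem_Icc.1 hc).2)]
  -- both sides are now `∑ u, C(p, u) x^(p - u)` times a sum of `C(u, c)` over a window of `c`
  refine sum_le_sum fun u hu => Nat.mul_le_mul_left _ ?_
  have hup : u ≤ p := Nat.lt_succ_iff.1 (mem_range.1 hu)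
  have left : {c ∈ Icc (b + r) p | c + 0 ≤ u} = Icc (b + r) u := by
    ext c; simp only [mem_filter, mem_Icc]; omega
  have right (hbu : b ≤ u) : {c ∈ Icc r p | c + b ≤ u} = Icc r (u - b) := by
    ext c; simp only [mem_filter, mem_Icc]; omega
  rw [left]
  by_cases hbu : b ≤ u
  · rw [right hbu]
    exact sum_Icc_choose_le_sum_Icc_choose h
  · simp [Icc_eq_empty_of_lt (by omega : u < b + r)]

theorem add_one_pow_eq_sum_Icc_add_sum_Icc {R : Type*} [CommSemiring R] (x : R) {k p : ℕ}
    (hk : k ≤ p) :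
    (x + 1) ^ p = x ^ (p - k) * ∑ i ∈ Icc 1 k, (p.choose (p - k + i) : R) * x ^ i
      + ∑ s ∈ Icc k p, (p.choose s : R) * x ^ (p - s) := by
  have head : ∑ s ∈ range k, (p.choose s : R) * x ^ (p - s)
      = x ^ (p - k) * ∑ i ∈ Icc 1 k, (p.choose (p - k + i) : R) * x ^ i := by
    rw [mul_sum]
    refine sum_nbij' (k - ·) (k - ·) ?_ ?_ ?_ ?_ ?_ <;> intro s hs <;>
      simp only [mem_Icc, mem_range] at hs ⊢
    any_goals omega
    rw [← Nat.choose_symm (by omega : s ≤ p), mul_left_comm, ← pow_add]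
    congr 3 <;> omega
  rw [add_comm x, add_pow, ← sum_range_add_sum_Ico _ (by omega : k ≤ p + 1),
    Ico_add_one_right_eq_Icc, ← head]
  simp only [one_pow, one_mul, mul_comm (x ^ _)]

theorem Finset.sum_filter_le_card_apply_card {α M : Type*} [Fintype α] [AddCommMonoid M]
    (r : ℕ) (f : ℕ → M) :
    ∑ s : Finset α with r ≤ #s, f #s
      = ∑ c ∈ Icc r (Fintype.card α), (Fintype.card α).choose c • f c := by
  classical
  rw [sum_filter, ← powerset_univ, sum_powerset_apply_card (fun c => if r ≤ c then f c else 0),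
    card_univ]
  simp_rw [smul_ite, smul_zero]
  rw [← sum_filter]
  congr 1
  ext c
  simp only [mem_filter, mem_range, mem_Icc]
  omega

theorem Finpartition.ofSetoid_ker_parts {α β : Type*} [Fintype α] [Fintype β] [DecidableEq α]
    [DecidableEq β] {f : α → β} (hf : Function.Surjective f) [DecidableRel (Setoid.ker f).r] :
    (Finpartition.ofSetoid (Setoid.ker f)).parts
      = univ.image fun j => ({i | f i = j} : Finset α) := by
  rw [← image_univ_of_surjective hf, image_image, Finpartition.ofSetoid,
    Finpartition.ofSetSetoid_parts]
  congr 1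
  ext a : 1
  ext x
  simp [Setoid.ker_def, eq_comm]

abbrev LargeFiberMap (r m : ℕ) (α : Type*) [Fintype α] :=
  {f : α → Fin m // ∀ j, r ≤ #{i | f i = j}}

namespace LargeFiberMap

section

variable {α : Type*} [Fintype α]

theorem card_congr {β : Type*} [Fintype β] (r m : ℕ) (e : α ≃ β) :
    Nat.card (LargeFiberMap r m α) = Nat.card (LargeFiberMap r m β) := by
  refine Nat.card_congr ((e.arrowCongr (.refl _)).subtypeEquiv fun f => ?_)
  refine forall_congr' fun j => ?_
  suffices #{b | f (e.symm b) = j} = #{a | f a = j} by simp [Equiv.arrowCongr, this]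
  rw [← card_map e.toEmbedding]
  congr 1
  ext b
  simp

theorem card_one_pos {r : ℕ} (h : r ≤ Fintype.card α) : 0 < Nat.card (LargeFiberMap r 1 α) :=
  Nat.card_pos_iff.2
    ⟨⟨⟨fun _ => 0, fun j => by simpa [Subsingleton.elim j 0] using h⟩⟩, inferInstance⟩

variable [DecidableEq α] {m : ℕ}

def extendByLast (s : Finset α) (g : {x // x ∉ s} → Fin m) (i : α) : Fin (m + 1) :=
  if h : i ∈ s then Fin.last m else (g ⟨i, h⟩).castSucc

theorem filter_extendByLast_eq_last (s : Finset α) (g : {x // x ∉ s} → Fin m) :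
    ({i | extendByLast s g i = Fin.last m} : Finset α) = s := by
  ext i
  by_cases h : i ∈ s <;> simp [extendByLast, h, Fin.castSucc_ne_last]

theorem card_filter_extendByLast_eq_castSucc (s : Finset α) (g : {x // x ∉ s} → Fin m)
    (j : Fin m) : #{i | extendByLast s g i = j.castSucc} = #{i | g i = j} := by
  refine (card_bij (fun a _ => a.1) ?_ (fun a _ b _ => Subtype.ext) ?_).symm
  · intro a ha
    simp only [mem_filter, mem_univ, true_and] at ha ⊢
    simp [extendByLast, a.2, ha]
  · intro i hi
    simp only [mem_filter, mem_univ, true_and] at hi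
    have hs : i ∉ s := fun h => by
      simp [extendByLast, h, (Fin.castSucc_ne_last j).symm] at hi
    refine ⟨⟨i, hs⟩, ?_, rfl⟩
    simp only [mem_filter, mem_univ, true_and]
    simpa [extendByLast, hs] using hi

theorem sum_card_compl_le_card_succ (r : ℕ) :
    ∑ s : {s : Finset α // r ≤ #s}, Nat.card (LargeFiberMap r m {x // x ∉ s.1})
      ≤ Nat.card (LargeFiberMap r (m + 1) α) := by
  rw [← Nat.card_sigma]
  have large (x : Σ s : {s : Finset α // r ≤ #s}, LargeFiberMap r m {x // x ∉ s.1})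
      (j : Fin (m + 1)) : r ≤ #{i | extendByLast x.1.1 x.2.1 i = j} := by
    induction j using Fin.lastCases with
    | last => rw [filter_extendByLast_eq_last]; exact x.1.2
    | cast j => rw [card_filter_extendByLast_eq_castSucc]; exact x.2.2 j
  refine Nat.card_le_card_of_injective (fun x => ⟨_, large x⟩) ?_
  rintro ⟨⟨s, _⟩, ⟨g, _⟩⟩ ⟨⟨t, _⟩, ⟨g', _⟩⟩ h
  replace h : extendByLast s g = extendByLast t g' := congrArg Subtype.val h
  obtain rfl : s = t := by
    rw [← filter_extendByLast_eq_last s g, ← filter_extendByLast_eq_last t g', h]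
  obtain rfl : g = g' := funext fun i => by
    simpa [extendByLast, i.2] using congrFun h i.1
  rfl

end

theorem sum_choose_mul_card_le_card_succ (r m p : ℕ) :
    ∑ c ∈ Icc r p, p.choose c * Nat.card (LargeFiberMap r m (Fin (p - c)))
      ≤ Nat.card (LargeFiberMap r (m + 1) (Fin p)) := by
  calc ∑ c ∈ Icc r p, p.choose c * Nat.card (LargeFiberMap r m (Fin (p - c)))
      = ∑ s : Finset (Fin p) with r ≤ #s, Nat.card (LargeFiberMap r m (Fin (p - #s))) := by
        rw [Finset.sum_filter_le_card_apply_card r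
          (fun c => Nat.card (LargeFiberMap r m (Fin (p - c)))), Fintype.card_fin]
        rfl
    _ = ∑ s : {s : Finset (Fin p) // r ≤ #s}, Nat.card (LargeFiberMap r m {x // x ∉ s.1}) := by
        rw [sum_subtype _ (p := fun s : Finset (Fin p) => r ≤ #s) (fun s => by simp)]
        refine Fintype.sum_congr _ _ fun s => card_congr r m (Fintype.equivFinOfCardEq ?_).symm
        simp [Fintype.card_subtype_compl]
    _ ≤ Nat.card (LargeFiberMap r (m + 1) (Fin p)) := sum_card_compl_le_card_succ r

variable {r m p : ℕ}

theorem surjective (hr : 0 < r) (f : LargeFiberMap r m (Fin p)) : Function.Surjective f.1 :=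
  fun j => by
    obtain ⟨i, hi⟩ := card_pos.1 (hr.trans_le (f.2 j))
    exact ⟨i, (mem_filter.1 hi).2⟩

theorem card_le_stirlingAssoc_mul_factorial (hr : 0 < r) :
    Nat.card (LargeFiberMap r m (Fin p)) ≤ stirlingAssoc r p m * m.factorial := by
  classical
  have fiber_inj (f : LargeFiberMap r m (Fin p)) :
      Function.Injective fun j => ({i | f.1 i = j} : Finset (Fin p)) := fun j j' h => by
    obtain ⟨i, rfl⟩ := surjective hr f j
    have hi : i ∈ ({i' | f.1 i' = f.1 i} : Finset (Fin p)) := by simp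
    simp only at h
    rw [h] at hi
    simpa using hi
  have parts_eq (f : LargeFiberMap r m (Fin p)) :=
    Finpartition.ofSetoid_ker_parts (surjective hr f)
  let φ (f : LargeFiberMap r m (Fin p)) :
      {P : Finpartition (univ : Finset (Fin p)) // #P.parts = m ∧ ∀ s ∈ P.parts, r ≤ #s} :=
    ⟨Finpartition.ofSetoid (Setoid.ker f.1), by
      rw [parts_eq, card_image_of_injective _ (fiber_inj f), card_univ, Fintype.card_fin], by
      simpa [parts_eq f] using f.2⟩
  rw [stirlingAssoc, ← Nat.card_congr (Equiv.sigmaFiberEquiv φ), Nat.card_sigma]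
  calc ∑ P, Nat.card {f // φ f = P} ≤ ∑ _P, m.factorial := sum_le_sum fun P _ => ?_
    _ = _ := by simp [Nat.card_eq_fintype_card]
  -- a map is determined by its partition into fibres together with the labelling of the fibres
  have card_emb : Nat.card (Fin m ↪ P.1.parts) = m.factorial := by
    rw [Nat.card_eq_fintype_card, Fintype.card_embedding_eq, Fintype.card_fin, Fintype.card_coe,
      P.2.1, Nat.descFactorial_self]
  have mem_parts (f : {f // φ f = P}) (j : Fin m) :
      ({i | f.1.1 i = j} : Finset (Fin p)) ∈ P.1.parts := by
    obtain ⟨f, rfl⟩ := f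
    exact (parts_eq f).symm ▸ mem_image_of_mem _ (mem_univ j)
  rw [← card_emb]
  refine Nat.card_le_card_of_injective
    (fun f => ⟨fun j => ⟨_, mem_parts f j⟩,
      fun j j' h => fiber_inj f.1 (congrArg Subtype.val h)⟩) ?_
  intro f g h
  refine Subtype.ext (Subtype.ext (funext fun i => ?_))
  have same_fiber : ({i' | f.1.1 i' = f.1.1 i} : Finset (Fin p))
      = ({i' | g.1.1 i' = f.1.1 i} : Finset (Fin p)) :=
    congrArg Subtype.val (DFunLike.congr_fun h (f.1.1 i))
  have hi : i ∈ ({i' | g.1.1 i' = f.1.1 i} : Finset (Fin p)) := by simp [← same_fiber]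
  exact ((mem_filter.1 hi).2).symm

end LargeFiberMap

theorem binomialTail_le_card_largeFiberMap (r n p : ℕ) :
    binomialTail p (r * (n + 1)) n ≤ Nat.card (LargeFiberMap r (n + 1) (Fin p)) := by
  induction n generalizing p with
  | zero =>
    rcases le_or_gt r p with hrp | hrp
    · calc binomialTail p (r * (0 + 1)) 0 = 1 := by
            rw [binomialTail, sum_eq_single p]
            · simp
            · intro s hs hsp
              rw [zero_pow (by grind), mul_zero]
            · simp [hrp]
        _ ≤ _ := LargeFiberMap.card_one_pos (by simpa using hrp)
    · simp [binomialTail, Icc_eq_empty_of_lt hrp]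
  | succ n ih =>
    calc binomialTail p (r * (n + 1 + 1)) (n + 1)
        = binomialTail p (r * (n + 1) + r) (n + 1) := by ring_nf
      _ ≤ ∑ c ∈ Icc r p, p.choose c * binomialTail (p - c) (r * (n + 1)) n :=
          binomialTail_succ_le (Nat.le_mul_of_pos_right r n.succ_pos)
      _ ≤ ∑ c ∈ Icc r p, p.choose c * Nat.card (LargeFiberMap r (n + 1) (Fin (p - c))) :=
          sum_le_sum fun c _ => Nat.mul_le_mul_left _ (ih _)
      _ ≤ _ := LargeFiberMap.sum_choose_mul_card_le_card_succ r (n + 1) p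

theorem stmt_18 (m r : ℕ) (hm : 0 < m) (hr : 0 < r) (p : ℕ) (hp : r * m ≤ p) :
    (stirlingAssoc r p m : ℝ) ≥
      (m : ℝ) ^ p / (m.factorial : ℝ) -
        ((m : ℝ) - 1) ^ (p - r * m) / (m.factorial : ℝ) *
          ∑ i ∈ Finset.Icc 1 (m * r),
            (p.choose (p - r * m + i) : ℝ) * ((m : ℝ) - 1) ^ i := by
  obtain ⟨n, rfl⟩ := Nat.exists_eq_add_one_of_ne_zero hm.ne'
  have tail_le :
      (binomialTail p (r * (n + 1)) n : ℝ) ≤ stirlingAssoc r p (n + 1) * (n + 1).factorial := by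
    exact_mod_cast (binomialTail_le_card_largeFiberMap r n p).trans
      (LargeFiberMap.card_le_stirlingAssoc_mul_factorial hr)
  have expansion := add_one_pow_eq_sum_Icc_add_sum_Icc (n : ℝ) hp
  simp only [binomialTail, Nat.cast_sum, Nat.cast_mul, Nat.cast_pow] at tail_le
  push_cast
  rw [add_sub_cancel_right, mul_comm (n + 1) r, ge_iff_le, div_mul_eq_mul_div, ← sub_div,
    div_le_iff₀ (by positivity), expansion]
  linarith
end
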